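/- arXiv:2209.02822 — 6 statements merged into one kernel-verified Lean document; each statement's English description precedes it below -/
import Mathlib

section
/- Let κ:ℝ²→ℝ be C¹ and let 𝔲:ℝ×ℝ³→ℝ, (t,x₀,x₁,x₂)↦𝔲(t,x₀,x₁,x₂), be C² and satisfy the embedding PDE ∂𝔲/∂t = (∂_{x₀}+∂_{x₁}+∂_{x₂})[κ(x₁,x₂)(∂_{x₀}𝔲+∂_{x₁}𝔲+∂_{x₂}𝔲)] at every point. Then for every pair of phases (φ₁,φ₂)∈ℝ², the function u_φ(t,x) := 𝔲(t,x,x+φ₁,x+φ₂) satisfies the heterogeneous diffusion PDE ∂u_φ/∂t = ∂/∂x[κ(x+φ₁,x+φ₂)·∂u_φ/∂x] for all (t,x); in particular, u(t,x) := 𝔲(t,x,x,x) satisfies ∂u/∂t = ∂/∂x[κ(x,x)·∂u/∂x]. -/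
open Real

/-- Partial derivative with respect to the time argument. -/
noncomputable def pdt (f : ℝ → ℝ → ℝ → ℝ → ℝ) (t x₀ x₁ x₂ : ℝ) : ℝ :=
  deriv (fun s => f s x₀ x₁ x₂) t

/-- Partial derivative with respect to `x₀`. -/
noncomputable def pd0 (f : ℝ → ℝ → ℝ → ℝ → ℝ) (t x₀ x₁ x₂ : ℝ) : ℝ :=
  deriv (fun s => f t s x₁ x₂) x₀

/-- Partial derivative with respect to `x₁`. -/
noncomputable def pd1 (f : ℝ → ℝ → ℝ → ℝ → ℝ) (t x₀ x₁ x₂ : ℝ) : ℝ :=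
  deriv (fun s => f t x₀ s x₂) x₁

/-- Partial derivative with respect to `x₂`. -/
noncomputable def pd2 (f : ℝ → ℝ → ℝ → ℝ → ℝ) (t x₀ x₁ x₂ : ℝ) : ℝ :=
  deriv (fun s => f t x₀ x₁ s) x₂

/-- The flux `κ(x₁,x₂) (∂₀𝔲 + ∂₁𝔲 + ∂₂𝔲)`. -/
noncomputable def flux (κ : ℝ → ℝ → ℝ) (f : ℝ → ℝ → ℝ → ℝ → ℝ) (t x₀ x₁ x₂ : ℝ) : ℝ :=
  κ x₁ x₂ * (pd0 f t x₀ x₁ x₂ + pd1 f t x₀ x₁ x₂ + pd2 f t x₀ x₁ x₂)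

section Aux

abbrev E4 := ℝ × ℝ × ℝ × ℝ

lemma comp_deriv' {F : E4 → ℝ} {γ : ℝ → E4} {v : E4} {x : ℝ}
    (hF : DifferentiableAt ℝ F (γ x)) (hγ : HasDerivAt γ v x) :
    deriv (fun s => F (γ s)) x = fderiv ℝ F (γ x) v :=
  (hF.hasFDerivAt.comp_hasDerivAt x hγ).deriv

lemma path1 (t x₀ x₁ x₂ : ℝ) :
    HasDerivAt (fun s : ℝ => ((t, s, x₁, x₂) : E4)) (0, 1, 0, 0) x₀ :=
  (hasDerivAt_const x₀ t).prodMk ((hasDerivAt_id x₀).prodMk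
    ((hasDerivAt_const x₀ x₁).prodMk (hasDerivAt_const x₀ x₂)))

lemma path2 (t x₀ x₁ x₂ : ℝ) :
    HasDerivAt (fun s : ℝ => ((t, x₀, s, x₂) : E4)) (0, 0, 1, 0) x₁ :=
  (hasDerivAt_const x₁ t).prodMk ((hasDerivAt_const x₁ x₀).prodMk
    ((hasDerivAt_id x₁).prodMk (hasDerivAt_const x₁ x₂)))

lemma path3 (t x₀ x₁ x₂ : ℝ) :
    HasDerivAt (fun s : ℝ => ((t, x₀, x₁, s) : E4)) (0, 0, 0, 1) x₂ :=
  (hasDerivAt_const x₂ t).prodMk ((hasDerivAt_const x₂ x₀).prodMk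
    ((hasDerivAt_const x₂ x₁).prodMk (hasDerivAt_id x₂)))

lemma pathD (t a b x : ℝ) :
    HasDerivAt (fun z : ℝ => ((t, z, z + a, z + b) : E4)) (0, 1, 1, 1) x :=
  (hasDerivAt_const x t).prodMk ((hasDerivAt_id x).prodMk
    (((hasDerivAt_id x).add_const a).prodMk ((hasDerivAt_id x).add_const b)))

lemma vsum : ((0, 1, 1, 1) : E4) = (0,1,0,0) + (0,0,1,0) + (0,0,0,1) := by
  norm_num [Prod.ext_iff]

/-- Sum of spatial partials equals the directional derivative in direction (0,1,1,1). -/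
lemma pd_sum_eq (H : ℝ → ℝ → ℝ → ℝ → ℝ) (Hu : E4 → ℝ)
    (hH : ∀ t x₀ x₁ x₂ : ℝ, H t x₀ x₁ x₂ = Hu (t, x₀, x₁, x₂))
    (hd : Differentiable ℝ Hu) (t x₀ x₁ x₂ : ℝ) :
    pd0 H t x₀ x₁ x₂ + pd1 H t x₀ x₁ x₂ + pd2 H t x₀ x₁ x₂ =
      fderiv ℝ Hu (t, x₀, x₁, x₂) (0, 1, 1, 1) := by
  have h0 : pd0 H t x₀ x₁ x₂ = fderiv ℝ Hu (t, x₀, x₁, x₂) (0, 1, 0, 0) := by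
    have := comp_deriv' (F := Hu) (hd _) (path1 t x₀ x₁ x₂)
    simpa [pd0, hH] using this
  have h1 : pd1 H t x₀ x₁ x₂ = fderiv ℝ Hu (t, x₀, x₁, x₂) (0, 0, 1, 0) := by
    have := comp_deriv' (F := Hu) (hd _) (path2 t x₀ x₁ x₂)
    simpa [pd1, hH] using this
  have h2 : pd2 H t x₀ x₁ x₂ = fderiv ℝ Hu (t, x₀, x₁, x₂) (0, 0, 0, 1) := by
    have := comp_deriv' (F := Hu) (hd _) (path3 t x₀ x₁ x₂)
    simpa [pd2, hH] using this
  rw [h0, h1, h2, vsum, map_add, map_add]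

end Aux

theorem phase_shift_solutions_of_embedding_pde
    (κ : ℝ → ℝ → ℝ) (hκ : ContDiff ℝ 1 (fun p : ℝ × ℝ => κ p.1 p.2))
    (𝔲 : ℝ → ℝ → ℝ → ℝ → ℝ)
    (h𝔲 : ContDiff ℝ 2 (fun p : ℝ × ℝ × ℝ × ℝ => 𝔲 p.1 p.2.1 p.2.2.1 p.2.2.2))
    (hpde : ∀ t x₀ x₁ x₂ : ℝ,
      pdt 𝔲 t x₀ x₁ x₂ =
        pd0 (flux κ 𝔲) t x₀ x₁ x₂ + pd1 (flux κ 𝔲) t x₀ x₁ x₂ + pd2 (flux κ 𝔲) t x₀ x₁ x₂) :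
    (∀ φ₁ φ₂ t x : ℝ,
      deriv (fun s => 𝔲 s x (x + φ₁) (x + φ₂)) t =
        deriv (fun y => κ (y + φ₁) (y + φ₂) *
          deriv (fun z => 𝔲 t z (z + φ₁) (z + φ₂)) y) x) ∧
    (∀ t x : ℝ,
      deriv (fun s => 𝔲 s x x x) t =
        deriv (fun y => κ y y * deriv (fun z => 𝔲 t z z z) y) x) := by
  set Gu : E4 → ℝ := fun p => 𝔲 p.1 p.2.1 p.2.2.1 p.2.2.2 with hGudef
  have hGd : Differentiable ℝ Gu := h𝔲.differentiable two_ne_zero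
  -- the uncurried flux
  set Fhat : E4 → ℝ := fun p => κ p.2.2.1 p.2.2.2 * fderiv ℝ Gu p (0, 1, 1, 1) with hFhat
  have hflux_eq : ∀ t x₀ x₁ x₂ : ℝ, flux κ 𝔲 t x₀ x₁ x₂ = Fhat (t, x₀, x₁, x₂) := by
    intro t x₀ x₁ x₂
    simp only [flux, hFhat]
    rw [pd_sum_eq 𝔲 Gu (fun _ _ _ _ => rfl) hGd]
  -- Fhat is differentiable
  have hFd : Differentiable ℝ Fhat := by
    have h1 : ContDiff ℝ 1 (fun p : E4 => fderiv ℝ Gu p) :=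
      h𝔲.fderiv_right (by norm_num)
    have h2 : ContDiff ℝ 1 (fun p : E4 => fderiv ℝ Gu p ((0:ℝ), 1, 1, 1)) :=
      h1.clm_apply contDiff_const
    have h3 : ContDiff ℝ 1 (fun p : E4 => κ p.2.2.1 p.2.2.2) :=
      hκ.comp ((contDiff_fst.comp (contDiff_snd.comp contDiff_snd)).prodMk
        (contDiff_snd.comp (contDiff_snd.comp contDiff_snd)))
    exact (h3.mul h2).differentiable one_ne_zero
  have main : ∀ φ₁ φ₂ t x : ℝ,
      deriv (fun s => 𝔲 s x (x + φ₁) (x + φ₂)) t =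
        deriv (fun y => κ (y + φ₁) (y + φ₂) *
          deriv (fun z => 𝔲 t z (z + φ₁) (z + φ₂)) y) x := by
    intro φ₁ φ₂ t x
    have hLHS : deriv (fun s => 𝔲 s x (x + φ₁) (x + φ₂)) t = pdt 𝔲 t x (x + φ₁) (x + φ₂) := rfl
    have hfun : (fun y => κ (y + φ₁) (y + φ₂) *
        deriv (fun z => 𝔲 t z (z + φ₁) (z + φ₂)) y) = fun y => Fhat (t, y, y + φ₁, y + φ₂) := by
      funext y
      have hdz : deriv (fun z => 𝔲 t z (z + φ₁) (z + φ₂)) y =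
          fderiv ℝ Gu (t, y, y + φ₁, y + φ₂) (0, 1, 1, 1) := by
        have := comp_deriv' (F := Gu) (hGd _) (pathD t φ₁ φ₂ y)
        simpa using this
      rw [hdz]
    have hRHS : deriv (fun y => Fhat (t, y, y + φ₁, y + φ₂)) x =
        fderiv ℝ Fhat (t, x, x + φ₁, x + φ₂) (0, 1, 1, 1) := by
      have := comp_deriv' (F := Fhat) (hFd _) (pathD t φ₁ φ₂ x)
      simpa using this
    rw [hLHS, hfun, hRHS, hpde t x (x + φ₁) (x + φ₂),
      pd_sum_eq (flux κ 𝔲) Fhat hflux_eq hFd]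
  refine ⟨main, fun t x => ?_⟩
  simpa using main 0 0 t x
end

section
/- Let κ:ℝ²→ℝ be C¹ and let u:ℝ×ℝ×ℝ²→ℝ, (t,x,φ₁,φ₂)↦u_φ(t,x), be a C² family of solutions parametrised by the phase vector φ=(φ₁,φ₂), such that for every fixed φ the function u_φ satisfies ∂u_φ/∂t = ∂/∂x[κ(x+φ₁,x+φ₂)·∂u_φ/∂x] at every (t,x). Then the field 𝔲(t,x₀,x₁,x₂) := u_{(x₁−x₀, x₂−x₀)}(t,x₀) satisfies the embedding PDE ∂𝔲/∂t = (∂_{x₀}+∂_{x₁}+∂_{x₂})[κ(x₁,x₂)(∂_{x₀}𝔲+∂_{x₁}𝔲+∂_{x₂}𝔲)] at every point. -/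
open Real

/-- Key "shift sum" identity: for a differentiable `F`, the sum of the three partial
derivatives of `(t,x₀,x₁,x₂) ↦ F (t, x₀, x₁-x₀, x₂-x₀)` equals the `x`-derivative of `F`
at the shifted point. -/
lemma shift_sum (F : ℝ × ℝ × ℝ × ℝ → ℝ) (t x₀ x₁ x₂ : ℝ)
    (hF : DifferentiableAt ℝ F (t, x₀, x₁ - x₀, x₂ - x₀)) :
    deriv (fun s => F (t, s, x₁ - s, x₂ - s)) x₀
    + deriv (fun s => F (t, x₀, s - x₀, x₂ - x₀)) x₁
    + deriv (fun s => F (t, x₀, x₁ - x₀, s - x₀)) x₂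
    = deriv (fun s => F (t, s, x₁ - x₀, x₂ - x₀)) x₀ := by
  have hF' := hF.hasFDerivAt
  set L := fderiv ℝ F (t, x₀, x₁ - x₀, x₂ - x₀) with hL
  have h0 : HasDerivAt (fun s => F (t, s, x₁ - s, x₂ - s))
      (L ((0:ℝ), (1:ℝ), (-1:ℝ), (-1:ℝ))) x₀ := by
    have hc : HasDerivAt (fun s : ℝ => ((t, s, x₁ - s, x₂ - s) : ℝ × ℝ × ℝ × ℝ))
        ((0:ℝ), (1:ℝ), (-1:ℝ), (-1:ℝ)) x₀ :=
      (hasDerivAt_const _ _).prodMk ((hasDerivAt_id _).prodMk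
        (((hasDerivAt_id _).const_sub _).prodMk ((hasDerivAt_id _).const_sub _)))
    exact hF'.comp_hasDerivAt _ hc
  have h1 : HasDerivAt (fun s => F (t, x₀, s - x₀, x₂ - x₀))
      (L ((0:ℝ), (0:ℝ), (1:ℝ), (0:ℝ))) x₁ := by
    have hc : HasDerivAt (fun s : ℝ => ((t, x₀, s - x₀, x₂ - x₀) : ℝ × ℝ × ℝ × ℝ))
        ((0:ℝ), (0:ℝ), (1:ℝ), (0:ℝ)) x₁ :=
      (hasDerivAt_const _ _).prodMk ((hasDerivAt_const _ _).prodMk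
        (((hasDerivAt_id _).sub_const _).prodMk (hasDerivAt_const _ _)))
    exact hF'.comp_hasDerivAt _ hc
  have h2 : HasDerivAt (fun s => F (t, x₀, x₁ - x₀, s - x₀))
      (L ((0:ℝ), (0:ℝ), (0:ℝ), (1:ℝ))) x₂ := by
    have hc : HasDerivAt (fun s : ℝ => ((t, x₀, x₁ - x₀, s - x₀) : ℝ × ℝ × ℝ × ℝ))
        ((0:ℝ), (0:ℝ), (0:ℝ), (1:ℝ)) x₂ :=
      (hasDerivAt_const _ _).prodMk ((hasDerivAt_const _ _).prodMk
        ((hasDerivAt_const _ _).prodMk ((hasDerivAt_id _).sub_const _)))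
    exact hF'.comp_hasDerivAt _ hc
  have hx : HasDerivAt (fun s => F (t, s, x₁ - x₀, x₂ - x₀))
      (L ((0:ℝ), (1:ℝ), (0:ℝ), (0:ℝ))) x₀ := by
    have hc : HasDerivAt (fun s : ℝ => ((t, s, x₁ - x₀, x₂ - x₀) : ℝ × ℝ × ℝ × ℝ))
        ((0:ℝ), (1:ℝ), (0:ℝ), (0:ℝ)) x₀ :=
      (hasDerivAt_const _ _).prodMk ((hasDerivAt_id _).prodMk
        ((hasDerivAt_const _ _).prodMk (hasDerivAt_const _ _)))
    exact hF'.comp_hasDerivAt _ hc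
  rw [h0.deriv, h1.deriv, h2.deriv, hx.deriv, ← map_add, ← map_add]
  congr 1
  simp [Prod.ext_iff]

theorem embedding_pde_from_phase_shift_family
    (κ : ℝ → ℝ → ℝ) (hκ : ContDiff ℝ 1 (fun p : ℝ × ℝ => κ p.1 p.2))
    (u : ℝ → ℝ → ℝ → ℝ → ℝ)  -- u t x φ₁ φ₂
    (hu : ContDiff ℝ 2 (fun p : ℝ × ℝ × ℝ × ℝ => u p.1 p.2.1 p.2.2.1 p.2.2.2))
    (hpde : ∀ φ₁ φ₂ t x : ℝ,
      deriv (fun s => u s x φ₁ φ₂) t =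
        deriv (fun y => κ (y + φ₁) (y + φ₂) * deriv (fun z => u t z φ₁ φ₂) y) x)
    (𝔲 : ℝ → ℝ → ℝ → ℝ → ℝ)
    (h𝔲 : 𝔲 = fun t x₀ x₁ x₂ => u t x₀ (x₁ - x₀) (x₂ - x₀)) :
    ∀ t x₀ x₁ x₂ : ℝ,
      pdt 𝔲 t x₀ x₁ x₂ =
        pd0 (flux κ 𝔲) t x₀ x₁ x₂ + pd1 (flux κ 𝔲) t x₀ x₁ x₂ + pd2 (flux κ 𝔲) t x₀ x₁ x₂ := by
  subst h𝔲
  intro t x₀ x₁ x₂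
  set U : ℝ × ℝ × ℝ × ℝ → ℝ := fun p => u p.1 p.2.1 p.2.2.1 p.2.2.2 with hU
  have hUdiff : Differentiable ℝ U := hu.differentiable two_ne_zero
  set D : ℝ × ℝ × ℝ × ℝ → ℝ := fun p => fderiv ℝ U p ((0:ℝ), (1:ℝ), (0:ℝ), (0:ℝ)) with hD
  have hDcd : ContDiff ℝ 1 D :=
    (hu.fderiv_right (le_refl 2)).clm_apply contDiff_const
  -- Fact A : the x-derivative of u is D
  have factA : ∀ t' x' φ₁ φ₂ : ℝ,
      deriv (fun z => u t' z φ₁ φ₂) x' = D (t', x', φ₁, φ₂) := by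
    intro t' x' φ₁ φ₂
    have hc : HasDerivAt (fun z : ℝ => ((t', z, φ₁, φ₂) : ℝ × ℝ × ℝ × ℝ))
        ((0:ℝ), (1:ℝ), (0:ℝ), (0:ℝ)) x' :=
      (hasDerivAt_const _ _).prodMk ((hasDerivAt_id _).prodMk
        ((hasDerivAt_const _ _).prodMk (hasDerivAt_const _ _)))
    exact (((hUdiff _).hasFDerivAt).comp_hasDerivAt _ hc).deriv
  set G : ℝ × ℝ × ℝ × ℝ → ℝ :=
    fun p => κ (p.2.1 + p.2.2.1) (p.2.1 + p.2.2.2) * D p with hG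
  have hGdiff : Differentiable ℝ G := by
    have h1 : ContDiff ℝ 1 (fun p : ℝ × ℝ × ℝ × ℝ =>
        ((p.2.1 + p.2.2.1, p.2.1 + p.2.2.2) : ℝ × ℝ)) := by fun_prop
    exact ((hκ.comp h1).differentiable one_ne_zero).mul (hDcd.differentiable one_ne_zero)
  -- Fact B : the flux is G at the shifted point
  have factB : ∀ t' x₀' x₁' x₂' : ℝ,
      flux κ (fun t x₀ x₁ x₂ => u t x₀ (x₁ - x₀) (x₂ - x₀)) t' x₀' x₁' x₂'
        = G (t', x₀', x₁' - x₀', x₂' - x₀') := by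
    intro t' x₀' x₁' x₂'
    have hsum := shift_sum U t' x₀' x₁' x₂' (hUdiff _)
    have : pd0 (fun t x₀ x₁ x₂ => u t x₀ (x₁ - x₀) (x₂ - x₀)) t' x₀' x₁' x₂'
        + pd1 (fun t x₀ x₁ x₂ => u t x₀ (x₁ - x₀) (x₂ - x₀)) t' x₀' x₁' x₂'
        + pd2 (fun t x₀ x₁ x₂ => u t x₀ (x₁ - x₀) (x₂ - x₀)) t' x₀' x₁' x₂'
        = D (t', x₀', x₁' - x₀', x₂' - x₀') := by
      rw [pd0, pd1, pd2]
      rw [← factA t' x₀' (x₁' - x₀') (x₂' - x₀')]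
      exact hsum
    rw [flux, this, hG]
    have e1 : x₀' + (x₁' - x₀') = x₁' := by ring
    have e2 : x₀' + (x₂' - x₀') = x₂' := by ring
    simp only [e1, e2]
  -- rewrite the RHS partial derivatives using factB
  have hr0 : pd0 (flux κ (fun t x₀ x₁ x₂ => u t x₀ (x₁ - x₀) (x₂ - x₀))) t x₀ x₁ x₂
      = deriv (fun s => G (t, s, x₁ - s, x₂ - s)) x₀ := by
    rw [pd0]; congr 1; funext s; exact factB t s x₁ x₂
  have hr1 : pd1 (flux κ (fun t x₀ x₁ x₂ => u t x₀ (x₁ - x₀) (x₂ - x₀))) t x₀ x₁ x₂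
      = deriv (fun s => G (t, x₀, s - x₀, x₂ - x₀)) x₁ := by
    rw [pd1]; congr 1; funext s; exact factB t x₀ s x₂
  have hr2 : pd2 (flux κ (fun t x₀ x₁ x₂ => u t x₀ (x₁ - x₀) (x₂ - x₀))) t x₀ x₁ x₂
      = deriv (fun s => G (t, x₀, x₁ - x₀, s - x₀)) x₂ := by
    rw [pd2]; congr 1; funext s; exact factB t x₀ x₁ s
  rw [hr0, hr1, hr2, shift_sum G t x₀ x₁ x₂ (hGdiff _)]
  rw [pdt]
  rw [hpde (x₁ - x₀) (x₂ - x₀) t x₀]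
  congr 1
  funext y
  simp only [hG]
  rw [factA t y (x₁ - x₀) (x₂ - x₀)]
end

section
/- Let κ:ℝ²→ℝ be C¹ and let 𝔲:ℝ×ℝ³→ℝ be C² and satisfy the wave-embedding PDE ∂²𝔲/∂t² = (∂_{x₀}+∂_{x₁}+∂_{x₂})[κ(x₁,x₂)(∂_{x₀}𝔲+∂_{x₁}𝔲+∂_{x₂}𝔲)] at every point. Then for every pair of phases (φ₁,φ₂)∈ℝ², the function u_φ(t,x) := 𝔲(t,x,x+φ₁,x+φ₂) satisfies the heterogeneous wave PDE ∂²u_φ/∂t² = ∂/∂x[κ(x+φ₁,x+φ₂)·∂u_φ/∂x] for all (t,x); in particular, u(t,x) := 𝔲(t,x,x,x) satisfies ∂²u/∂t² = ∂/∂x[κ(x,x)·∂u/∂x]. -/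
open Real

noncomputable def pdtt (f : ℝ → ℝ → ℝ → ℝ → ℝ) (t x₀ x₁ x₂ : ℝ) : ℝ :=
  deriv (deriv (fun s => f s x₀ x₁ x₂)) t

lemma pd0_eq_fderiv (f : ℝ→ℝ→ℝ→ℝ→ℝ) (t x₀ x₁ x₂ : ℝ)
    (hf : DifferentiableAt ℝ (fun p : E4 => f p.1 p.2.1 p.2.2.1 p.2.2.2) (t,x₀,x₁,x₂)) :
    pd0 f t x₀ x₁ x₂ =
      fderiv ℝ (fun p : E4 => f p.1 p.2.1 p.2.2.1 p.2.2.2) (t,x₀,x₁,x₂) (0,1,0,0) := by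
  have hline : HasDerivAt (fun s : ℝ => ((t,s,x₁,x₂):E4)) ((0,1,0,0):E4) x₀ :=
    (hasDerivAt_const _ _).prodMk ((hasDerivAt_id _).prodMk
      ((hasDerivAt_const _ _).prodMk (hasDerivAt_const _ _)))
  exact (hf.hasFDerivAt.comp_hasDerivAt x₀ hline).deriv

lemma pd1_eq_fderiv (f : ℝ→ℝ→ℝ→ℝ→ℝ) (t x₀ x₁ x₂ : ℝ)
    (hf : DifferentiableAt ℝ (fun p : E4 => f p.1 p.2.1 p.2.2.1 p.2.2.2) (t,x₀,x₁,x₂)) :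
    pd1 f t x₀ x₁ x₂ =
      fderiv ℝ (fun p : E4 => f p.1 p.2.1 p.2.2.1 p.2.2.2) (t,x₀,x₁,x₂) (0,0,1,0) := by
  have hline : HasDerivAt (fun s : ℝ => ((t,x₀,s,x₂):E4)) ((0,0,1,0):E4) x₁ :=
    (hasDerivAt_const _ _).prodMk ((hasDerivAt_const _ _).prodMk
      ((hasDerivAt_id _).prodMk (hasDerivAt_const _ _)))
  exact (hf.hasFDerivAt.comp_hasDerivAt x₁ hline).deriv

lemma pd2_eq_fderiv (f : ℝ→ℝ→ℝ→ℝ→ℝ) (t x₀ x₁ x₂ : ℝ)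
    (hf : DifferentiableAt ℝ (fun p : E4 => f p.1 p.2.1 p.2.2.1 p.2.2.2) (t,x₀,x₁,x₂)) :
    pd2 f t x₀ x₁ x₂ =
      fderiv ℝ (fun p : E4 => f p.1 p.2.1 p.2.2.1 p.2.2.2) (t,x₀,x₁,x₂) (0,0,0,1) := by
  have hline : HasDerivAt (fun s : ℝ => ((t,x₀,x₁,s):E4)) ((0,0,0,1):E4) x₂ :=
    (hasDerivAt_const _ _).prodMk ((hasDerivAt_const _ _).prodMk
      ((hasDerivAt_const _ _).prodMk (hasDerivAt_id _)))
  exact (hf.hasFDerivAt.comp_hasDerivAt x₂ hline).deriv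

lemma deriv_diag (f : ℝ→ℝ→ℝ→ℝ→ℝ) (t φ₁ φ₂ x : ℝ)
    (hf : DifferentiableAt ℝ (fun p : E4 => f p.1 p.2.1 p.2.2.1 p.2.2.2) (t,x,x+φ₁,x+φ₂)) :
    deriv (fun z => f t z (z+φ₁) (z+φ₂)) x =
      fderiv ℝ (fun p : E4 => f p.1 p.2.1 p.2.2.1 p.2.2.2) (t,x,x+φ₁,x+φ₂) (0,1,1,1) := by
  have hline : HasDerivAt (fun z : ℝ => ((t,z,z+φ₁,z+φ₂):E4)) ((0,1,1,1):E4) x :=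
    (hasDerivAt_const _ _).prodMk ((hasDerivAt_id _).prodMk
      (((hasDerivAt_id _).add_const φ₁).prodMk ((hasDerivAt_id _).add_const φ₂)))
  exact (hf.hasFDerivAt.comp_hasDerivAt x hline).deriv

theorem phase_shift_solutions_of_wave_embedding_pde
    (κ : ℝ → ℝ → ℝ) (hκ : ContDiff ℝ 1 (fun p : ℝ × ℝ => κ p.1 p.2))
    (𝔲 : ℝ → ℝ → ℝ → ℝ → ℝ)
    (h𝔲 : ContDiff ℝ 2 (fun p : ℝ × ℝ × ℝ × ℝ => 𝔲 p.1 p.2.1 p.2.2.1 p.2.2.2))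
    (hpde : ∀ t x₀ x₁ x₂ : ℝ,
      pdtt 𝔲 t x₀ x₁ x₂ =
        pd0 (flux κ 𝔲) t x₀ x₁ x₂ + pd1 (flux κ 𝔲) t x₀ x₁ x₂ + pd2 (flux κ 𝔲) t x₀ x₁ x₂) :
    (∀ φ₁ φ₂ t x : ℝ,
      deriv (deriv (fun s => 𝔲 s x (x + φ₁) (x + φ₂))) t =
        deriv (fun y => κ (y + φ₁) (y + φ₂) *
          deriv (fun z => 𝔲 t z (z + φ₁) (z + φ₂)) y) x) ∧
    (∀ t x : ℝ,
      deriv (deriv (fun s => 𝔲 s x x x)) t =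
        deriv (fun y => κ y y * deriv (fun z => 𝔲 t z z z) y) x) := by
  set F : E4 → ℝ := fun p => 𝔲 p.1 p.2.1 p.2.2.1 p.2.2.2 with hF
  have hFd : Differentiable ℝ F := h𝔲.differentiable (by norm_num)
  -- the flux as a function on E4
  set G : E4 → ℝ := fun p =>
    κ p.2.2.1 p.2.2.2 * (fderiv ℝ F p (0,1,0,0) + fderiv ℝ F p (0,0,1,0) + fderiv ℝ F p (0,0,0,1))
    with hG
  have hGflux : ∀ t x₀ x₁ x₂ : ℝ, flux κ 𝔲 t x₀ x₁ x₂ = G (t,x₀,x₁,x₂) := by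
    intro t x₀ x₁ x₂
    rw [flux, pd0_eq_fderiv 𝔲 t x₀ x₁ x₂ (hFd _), pd1_eq_fderiv 𝔲 t x₀ x₁ x₂ (hFd _),
      pd2_eq_fderiv 𝔲 t x₀ x₁ x₂ (hFd _)]
  have hGfun : (fun p : E4 => flux κ 𝔲 p.1 p.2.1 p.2.2.1 p.2.2.2) = G := by
    funext p; exact hGflux p.1 p.2.1 p.2.2.1 p.2.2.2
  -- G is C¹
  have hfd1 : ContDiff ℝ 1 (fderiv ℝ F) := h𝔲.fderiv_right (le_refl _)
  have hGc : ContDiff ℝ 1 G := by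
    apply ContDiff.mul
    · exact hκ.comp (contDiff_snd.snd.fst.prodMk contDiff_snd.snd.snd)
    · exact ((hfd1.clm_apply contDiff_const).add (hfd1.clm_apply contDiff_const)).add
        (hfd1.clm_apply contDiff_const)
  have hGd : Differentiable ℝ G := hGc.differentiable one_ne_zero
  have main : ∀ φ₁ φ₂ t x : ℝ,
      deriv (deriv (fun s => 𝔲 s x (x + φ₁) (x + φ₂))) t =
        deriv (fun y => κ (y + φ₁) (y + φ₂) *
          deriv (fun z => 𝔲 t z (z + φ₁) (z + φ₂)) y) x := by
    intro φ₁ φ₂ t x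
    have hinner : (fun y => κ (y + φ₁) (y + φ₂) * deriv (fun z => 𝔲 t z (z+φ₁) (z+φ₂)) y)
        = fun y => G (t, y, y+φ₁, y+φ₂) := by
      funext y
      rw [deriv_diag 𝔲 t φ₁ φ₂ y (hFd _),
        show ((0,1,1,1) : E4) = (0,1,0,0) + (0,0,1,0) + (0,0,0,1) from by simp [Prod.ext_iff],
        map_add, map_add]
    rw [hinner]
    have hGdiag := deriv_diag (fun a b c d => G (a,b,c,d)) t φ₁ φ₂ x (hGd _)
    rw [show (fun z => G (t,z,z+φ₁,z+φ₂)) = (fun z =>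
        (fun a b c d => G ((a,b,c,d):E4)) t z (z+φ₁) (z+φ₂)) from rfl, hGdiag]
    have hpd := hpde t x (x+φ₁) (x+φ₂)
    rw [show deriv (deriv fun s => 𝔲 s x (x+φ₁) (x+φ₂)) t = pdtt 𝔲 t x (x+φ₁) (x+φ₂) from rfl,
      hpd]
    rw [show pd0 (flux κ 𝔲) t x (x+φ₁) (x+φ₂)
        = pd0 (fun a b c d => G (a,b,c,d)) t x (x+φ₁) (x+φ₂) from by
        unfold pd0; congr 1; funext s; exact hGflux t s (x+φ₁) (x+φ₂),
      show pd1 (flux κ 𝔲) t x (x+φ₁) (x+φ₂)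
        = pd1 (fun a b c d => G (a,b,c,d)) t x (x+φ₁) (x+φ₂) from by
        unfold pd1; congr 1; funext s; exact hGflux t x s (x+φ₂),
      show pd2 (flux κ 𝔲) t x (x+φ₁) (x+φ₂)
        = pd2 (fun a b c d => G (a,b,c,d)) t x (x+φ₁) (x+φ₂) from by
        unfold pd2; congr 1; funext s; exact hGflux t x (x+φ₁) s]
    rw [pd0_eq_fderiv _ t x (x+φ₁) (x+φ₂) (hGd _),
      pd1_eq_fderiv _ t x (x+φ₁) (x+φ₂) (hGd _),
      pd2_eq_fderiv _ t x (x+φ₁) (x+φ₂) (hGd _)]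
    have : ((0,1,1,1) : E4) = (0,1,0,0) + (0,0,1,0) + (0,0,0,1) := by
      simp [Prod.ext_iff]
    rw [this, map_add, map_add]
  refine ⟨main, fun t x => ?_⟩
  have := main 0 0 t x
  simpa using this
end

section
/- Let κ:ℝ²→ℝ be C¹ and let u:ℝ×ℝ×ℝ²→ℝ, (t,x,φ₁,φ₂)↦u_φ(t,x), be a C² family, parametrised by the phase vector φ=(φ₁,φ₂), such that for every fixed φ the function u_φ satisfies the heterogeneous wave PDE ∂²u_φ/∂t² = ∂/∂x[κ(x+φ₁,x+φ₂)·∂u_φ/∂x] at every (t,x). Then the field 𝔲(t,x₀,x₁,x₂) := u_{(x₁−x₀, x₂−x₀)}(t,x₀) satisfies the wave-embedding PDE ∂²𝔲/∂t² = (∂_{x₀}+∂_{x₁}+∂_{x₂})[κ(x₁,x₂)(∂_{x₀}𝔲+∂_{x₁}𝔲+∂_{x₂}𝔲)] at every point. -/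
open Real

/-- Auxiliary: derivative of a differentiable function along a path. -/
lemma deriv_along {G : ℝ × ℝ × ℝ × ℝ → ℝ} {γ : ℝ → ℝ × ℝ × ℝ × ℝ} {s₀ : ℝ}
    {v : ℝ × ℝ × ℝ × ℝ} (hG : DifferentiableAt ℝ G (γ s₀))
    (hγ : HasDerivAt γ v s₀) :
    deriv (fun s => G (γ s)) s₀ = fderiv ℝ G (γ s₀) v :=
  (hG.hasFDerivAt.comp_hasDerivAt s₀ hγ).deriv

theorem wave_embedding_pde_from_phase_shift_family
    (κ : ℝ → ℝ → ℝ) (hκ : ContDiff ℝ 1 (fun p : ℝ × ℝ => κ p.1 p.2))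
    (u : ℝ → ℝ → ℝ → ℝ → ℝ)  -- u t x φ₁ φ₂
    (hu : ContDiff ℝ 2 (fun p : ℝ × ℝ × ℝ × ℝ => u p.1 p.2.1 p.2.2.1 p.2.2.2))
    (hpde : ∀ φ₁ φ₂ t x : ℝ,
      deriv (deriv (fun s => u s x φ₁ φ₂)) t =
        deriv (fun y => κ (y + φ₁) (y + φ₂) * deriv (fun z => u t z φ₁ φ₂) y) x)
    (𝔲 : ℝ → ℝ → ℝ → ℝ → ℝ)
    (h𝔲 : 𝔲 = fun t x₀ x₁ x₂ => u t x₀ (x₁ - x₀) (x₂ - x₀)) :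
    ∀ t x₀ x₁ x₂ : ℝ,
      pdtt 𝔲 t x₀ x₁ x₂ =
        pd0 (flux κ 𝔲) t x₀ x₁ x₂ + pd1 (flux κ 𝔲) t x₀ x₁ x₂ + pd2 (flux κ 𝔲) t x₀ x₁ x₂ := by
  subst h𝔲
  set U : ℝ × ℝ × ℝ × ℝ → ℝ := fun p => u p.1 p.2.1 p.2.2.1 p.2.2.2 with hUdef
  have hUdiff : Differentiable ℝ U := hu.differentiable (by norm_num)
  -- the x-partial of u as a function on ℝ⁴
  have hUX : ContDiff ℝ 1 (fun p => fderiv ℝ U p ((0:ℝ), (1:ℝ), (0:ℝ), (0:ℝ))) :=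
    (hu.fderiv_right (le_refl _)).clm_apply contDiff_const
  -- Claim A : deriv in x equals fderiv applied to (0,1,0,0)
  have claimA : ∀ t x φ₁ φ₂ : ℝ,
      deriv (fun z => u t z φ₁ φ₂) x = fderiv ℝ U (t, x, φ₁, φ₂) ((0:ℝ),(1:ℝ),(0:ℝ),(0:ℝ)) := by
    intro t x φ₁ φ₂
    have hγ : HasDerivAt (fun z : ℝ => ((t, z, φ₁, φ₂) : ℝ × ℝ × ℝ × ℝ))
        ((0:ℝ),(1:ℝ),(0:ℝ),(0:ℝ)) x :=
      HasDerivAt.prodMk (hasDerivAt_const _ _) (HasDerivAt.prodMk (hasDerivAt_id _)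
        (HasDerivAt.prodMk (hasDerivAt_const _ _) (hasDerivAt_const _ _)))
    exact deriv_along (hUdiff _) hγ
  -- the flux as a function of (t, y, φ₁, φ₂)
  set F : ℝ × ℝ × ℝ × ℝ → ℝ := fun p =>
    κ (p.2.1 + p.2.2.1) (p.2.1 + p.2.2.2) * fderiv ℝ U p ((0:ℝ),(1:ℝ),(0:ℝ),(0:ℝ)) with hFdef
  have hκ' : ContDiff ℝ 1 (fun p : ℝ × ℝ × ℝ × ℝ => κ (p.2.1 + p.2.2.1) (p.2.1 + p.2.2.2)) := by
    have : ContDiff ℝ 1 (fun p : ℝ × ℝ × ℝ × ℝ => ((p.2.1 + p.2.2.1, p.2.1 + p.2.2.2) : ℝ × ℝ)) := by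
      fun_prop
    exact hκ.comp this
  have hF : ContDiff ℝ 1 F := hκ'.mul hUX
  have hFdiff : Differentiable ℝ F := hF.differentiable (by norm_num)
  intro t x₀ x₁ x₂
  -- sum of partials of 𝔲
  have sumPD : ∀ t y a b : ℝ,
      pd0 (fun t x₀ x₁ x₂ => u t x₀ (x₁ - x₀) (x₂ - x₀)) t y a b +
      pd1 (fun t x₀ x₁ x₂ => u t x₀ (x₁ - x₀) (x₂ - x₀)) t y a b +
      pd2 (fun t x₀ x₁ x₂ => u t x₀ (x₁ - x₀) (x₂ - x₀)) t y a b =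
      fderiv ℝ U (t, y, a - y, b - y) ((0:ℝ),(1:ℝ),(0:ℝ),(0:ℝ)) := by
    intro t y a b
    have hγ0 : HasDerivAt (fun s : ℝ => ((t, s, a - s, b - s) : ℝ × ℝ × ℝ × ℝ))
        ((0:ℝ),(1:ℝ),(-1:ℝ),(-1:ℝ)) y := by
      have := HasDerivAt.prodMk (hasDerivAt_const y t) (HasDerivAt.prodMk (hasDerivAt_id y)
        (HasDerivAt.prodMk (HasDerivAt.sub (hasDerivAt_const y a) (hasDerivAt_id y))
          (HasDerivAt.sub (hasDerivAt_const y b) (hasDerivAt_id y))))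
      simpa using this
    have hγ1 : HasDerivAt (fun s : ℝ => ((t, y, s - y, b - y) : ℝ × ℝ × ℝ × ℝ))
        ((0:ℝ),(0:ℝ),(1:ℝ),(0:ℝ)) a := by
      have := HasDerivAt.prodMk (hasDerivAt_const a t) (HasDerivAt.prodMk (hasDerivAt_const a y)
        (HasDerivAt.prodMk (HasDerivAt.sub (hasDerivAt_id a) (hasDerivAt_const a y)) (hasDerivAt_const a (b - y))))
      simpa using this
    have hγ2 : HasDerivAt (fun s : ℝ => ((t, y, a - y, s - y) : ℝ × ℝ × ℝ × ℝ))
        ((0:ℝ),(0:ℝ),(0:ℝ),(1:ℝ)) b := by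
      have := HasDerivAt.prodMk (hasDerivAt_const b t) (HasDerivAt.prodMk (hasDerivAt_const b y)
        (HasDerivAt.prodMk (hasDerivAt_const b (a - y)) (HasDerivAt.sub (hasDerivAt_id b) (hasDerivAt_const b y))))
      simpa using this
    have e0 : pd0 (fun t x₀ x₁ x₂ => u t x₀ (x₁ - x₀) (x₂ - x₀)) t y a b =
        fderiv ℝ U (t, y, a - y, b - y) ((0:ℝ),(1:ℝ),(-1:ℝ),(-1:ℝ)) :=
      deriv_along (hUdiff _) hγ0
    have e1 : pd1 (fun t x₀ x₁ x₂ => u t x₀ (x₁ - x₀) (x₂ - x₀)) t y a b =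
        fderiv ℝ U (t, y, a - y, b - y) ((0:ℝ),(0:ℝ),(1:ℝ),(0:ℝ)) :=
      deriv_along (hUdiff _) hγ1
    have e2 : pd2 (fun t x₀ x₁ x₂ => u t x₀ (x₁ - x₀) (x₂ - x₀)) t y a b =
        fderiv ℝ U (t, y, a - y, b - y) ((0:ℝ),(0:ℝ),(0:ℝ),(1:ℝ)) :=
      deriv_along (hUdiff _) hγ2
    rw [e0, e1, e2, ← ContinuousLinearMap.map_add, ← ContinuousLinearMap.map_add]
    norm_num [Prod.ext_iff]
  -- flux equals F composed with the embedding
  have hflux : flux κ (fun t x₀ x₁ x₂ => u t x₀ (x₁ - x₀) (x₂ - x₀)) =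
      fun t y a b => F (t, y, a - y, b - y) := by
    funext t y a b
    simp only [flux]
    rw [sumPD, hFdef]
    have h1 : y + (a - y) = a := by ring
    have h2 : y + (b - y) = b := by ring
    simp [h1, h2]
  -- LHS
  have lhs : pdtt (fun t x₀ x₁ x₂ => u t x₀ (x₁ - x₀) (x₂ - x₀)) t x₀ x₁ x₂ =
      fderiv ℝ F (t, x₀, x₁ - x₀, x₂ - x₀) ((0:ℝ),(1:ℝ),(0:ℝ),(0:ℝ)) := by
    have h1 : pdtt (fun t x₀ x₁ x₂ => u t x₀ (x₁ - x₀) (x₂ - x₀)) t x₀ x₁ x₂ =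
        deriv (deriv (fun s => u s x₀ (x₁ - x₀) (x₂ - x₀))) t := rfl
    rw [h1, hpde]
    have heq : (fun y => κ (y + (x₁ - x₀)) (y + (x₂ - x₀)) *
        deriv (fun z => u t z (x₁ - x₀) (x₂ - x₀)) y) =
        fun y => F (t, y, x₁ - x₀, x₂ - x₀) := by
      funext y
      rw [claimA, hFdef]
    rw [heq]
    have hγ : HasDerivAt (fun y : ℝ => ((t, y, x₁ - x₀, x₂ - x₀) : ℝ × ℝ × ℝ × ℝ))
        ((0:ℝ),(1:ℝ),(0:ℝ),(0:ℝ)) x₀ :=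
      HasDerivAt.prodMk (hasDerivAt_const _ _) (HasDerivAt.prodMk (hasDerivAt_id _)
        (HasDerivAt.prodMk (hasDerivAt_const _ _) (hasDerivAt_const _ _)))
    exact deriv_along (hFdiff _) hγ
  rw [lhs, hflux]
  -- RHS : partials of the flux
  have hγ0 : HasDerivAt (fun s : ℝ => ((t, s, x₁ - s, x₂ - s) : ℝ × ℝ × ℝ × ℝ))
      ((0:ℝ),(1:ℝ),(-1:ℝ),(-1:ℝ)) x₀ := by
    have := HasDerivAt.prodMk (hasDerivAt_const x₀ t) (HasDerivAt.prodMk (hasDerivAt_id x₀)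
      (HasDerivAt.prodMk (HasDerivAt.sub (hasDerivAt_const x₀ x₁) (hasDerivAt_id x₀))
        (HasDerivAt.sub (hasDerivAt_const x₀ x₂) (hasDerivAt_id x₀))))
    simpa using this
  have hγ1 : HasDerivAt (fun s : ℝ => ((t, x₀, s - x₀, x₂ - x₀) : ℝ × ℝ × ℝ × ℝ))
      ((0:ℝ),(0:ℝ),(1:ℝ),(0:ℝ)) x₁ := by
    have := HasDerivAt.prodMk (hasDerivAt_const x₁ t) (HasDerivAt.prodMk (hasDerivAt_const x₁ x₀)
      (HasDerivAt.prodMk (HasDerivAt.sub (hasDerivAt_id x₁) (hasDerivAt_const x₁ x₀)) (hasDerivAt_const x₁ (x₂ - x₀))))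
    simpa using this
  have hγ2 : HasDerivAt (fun s : ℝ => ((t, x₀, x₁ - x₀, s - x₀) : ℝ × ℝ × ℝ × ℝ))
      ((0:ℝ),(0:ℝ),(0:ℝ),(1:ℝ)) x₂ := by
    have := HasDerivAt.prodMk (hasDerivAt_const x₂ t) (HasDerivAt.prodMk (hasDerivAt_const x₂ x₀)
      (HasDerivAt.prodMk (hasDerivAt_const x₂ (x₁ - x₀)) (HasDerivAt.sub (hasDerivAt_id x₂) (hasDerivAt_const x₂ x₀))))
    simpa using this
  have e0 : pd0 (fun t y a b => F (t, y, a - y, b - y)) t x₀ x₁ x₂ =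
      fderiv ℝ F (t, x₀, x₁ - x₀, x₂ - x₀) ((0:ℝ),(1:ℝ),(-1:ℝ),(-1:ℝ)) :=
    deriv_along (hFdiff _) hγ0
  have e1 : pd1 (fun t y a b => F (t, y, a - y, b - y)) t x₀ x₁ x₂ =
      fderiv ℝ F (t, x₀, x₁ - x₀, x₂ - x₀) ((0:ℝ),(0:ℝ),(1:ℝ),(0:ℝ)) :=
    deriv_along (hFdiff _) hγ1
  have e2 : pd2 (fun t y a b => F (t, y, a - y, b - y)) t x₀ x₁ x₂ =
      fderiv ℝ F (t, x₀, x₁ - x₀, x₂ - x₀) ((0:ℝ),(0:ℝ),(0:ℝ),(1:ℝ)) :=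
    deriv_along (hFdiff _) hγ2
  rw [e0, e1, e2, ← ContinuousLinearMap.map_add, ← ContinuousLinearMap.map_add]
  norm_num [Prod.ext_iff]
end

section
/- Let ℓ₁,ℓ₂>0, let κ:ℝ²→ℝ be C¹, ℓᵢ-periodic in its i-th argument, and satisfy κ(x₁,x₂) ≥ κ_min > 0 everywhere. Suppose v:ℝ²→ℂ is C², ℓᵢ-periodic in xᵢ, not identically zero, and satisfies the eigen-problem L₀v = λ·v for some λ∈ℂ. Then λ is real and λ·∬_C |v|² dx₁dx₂ = −∬_C κ·|∂_{x₁}v+∂_{x₂}v|² dx₁dx₂ ≤ −κ_min·∬_C |∂_{x₁}v+∂_{x₂}v|² dx₁dx₂ ≤ 0; moreover λ = 0 if and only if ∂_{x₁}v+∂_{x₂}v ≡ 0. -/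
open Real

/-- Partial derivative of a complex-valued function in its first argument. -/
noncomputable def d1 (f : ℝ → ℝ → ℂ) (x₁ x₂ : ℝ) : ℂ := deriv (fun s => f s x₂) x₁

/-- Partial derivative of a complex-valued function in its second argument. -/
noncomputable def d2 (f : ℝ → ℝ → ℂ) (x₁ x₂ : ℝ) : ℂ := deriv (fun s => f x₁ s) x₂

/-- The cross-sectional operator `L₀ w = (∂₁+∂₂)[κ (∂₁w+∂₂w)]`. -/
noncomputable def L0 (κ : ℝ → ℝ → ℝ) (w : ℝ → ℝ → ℂ) (x₁ x₂ : ℝ) : ℂ :=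
  d1 (fun y₁ y₂ => (κ y₁ y₂ : ℂ) * (d1 w y₁ y₂ + d2 w y₁ y₂)) x₁ x₂ +
  d2 (fun y₁ y₂ => (κ y₁ y₂ : ℂ) * (d1 w y₁ y₂ + d2 w y₁ y₂)) x₁ x₂

open MeasureTheory intervalIntegral Set


lemma hasDerivAt_fst' (G : ℝ × ℝ → ℂ) (hG : Differentiable ℝ G) (x₁ x₂ : ℝ) :
    HasDerivAt (fun s => G (s, x₂)) (fderiv ℝ G (x₁, x₂) (1, 0)) x₁ := by
  have h1 : HasDerivAt (fun s : ℝ => (s, x₂)) ((1 : ℝ), (0 : ℝ)) x₁ :=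
    (hasDerivAt_id x₁).prodMk (hasDerivAt_const x₁ x₂)
  exact (hG (x₁, x₂)).hasFDerivAt.comp_hasDerivAt x₁ h1

lemma hasDerivAt_snd' (G : ℝ × ℝ → ℂ) (hG : Differentiable ℝ G) (x₁ x₂ : ℝ) :
    HasDerivAt (fun s => G (x₁, s)) (fderiv ℝ G (x₁, x₂) (0, 1)) x₂ := by
  have h1 : HasDerivAt (fun s : ℝ => (x₁, s)) ((0 : ℝ), (1 : ℝ)) x₂ :=
    (hasDerivAt_const x₂ x₁).prodMk (hasDerivAt_id x₂)
  exact (hG (x₁, x₂)).hasFDerivAt.comp_hasDerivAt x₂ h1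

lemma parts' {a b : ℝ} (u g u' g' : ℝ → ℂ)
    (hu : ∀ x, HasDerivAt u (u' x) x) (hg : ∀ x, HasDerivAt g (g' x) x)
    (hu' : Continuous u') (hg' : Continuous g')
    (hb : u b * g b = u a * g a) :
    ∫ x in a..b, u' x * g x = - ∫ x in a..b, u x * g' x := by
  have hcu : Continuous u := continuous_iff_continuousAt.2 fun x => (hu x).continuousAt
  have hcg : Continuous g := continuous_iff_continuousAt.2 fun x => (hg x).continuousAt
  have h := intervalIntegral.integral_deriv_mul_eq_sub (u := u) (v := g) (u' := u') (v' := g')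
    (fun x _ => hu x) (fun x _ => hg x) (hu'.intervalIntegrable a b) (hg'.intervalIntegrable a b)
  rw [hb, sub_self] at h
  rw [intervalIntegral.integral_add (f := fun x => u' x * g x) (g := fun x => u x * g' x) ((hu'.mul hcg).intervalIntegrable a b)
    ((hcu.mul hg').intervalIntegrable a b)] at h
  exact eq_neg_of_add_eq_zero_left h

lemma swapII (A : ℝ × ℝ → ℂ) (hA : Continuous A) {a b c d : ℝ} (hab : a ≤ b) (hcd : c ≤ d) :
    ∫ x in a..b, ∫ y in c..d, A (x, y) = ∫ y in c..d, ∫ x in a..b, A (x, y) := by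
  simp only [intervalIntegral.integral_of_le hab, intervalIntegral.integral_of_le hcd]
  apply MeasureTheory.integral_integral_swap
  rw [Measure.prod_restrict]
  exact ((hA.continuousOn.integrableOn_compact (isCompact_Icc.prod isCompact_Icc)).mono_set
    (Set.prod_mono Set.Ioc_subset_Icc_self Set.Ioc_subset_Icc_self))

lemma splitII {a b c d : ℝ} (A B : ℝ × ℝ → ℂ) (hA : Continuous A) (hB : Continuous B) :
    ∫ x in a..b, ∫ y in c..d, (A (x, y) + B (x, y)) =
      (∫ x in a..b, ∫ y in c..d, A (x, y)) + ∫ x in a..b, ∫ y in c..d, B (x, y) := by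
  have hinner : ∀ x : ℝ, (∫ y in c..d, (A (x, y) + B (x, y))) =
      (∫ y in c..d, A (x, y)) + ∫ y in c..d, B (x, y) := fun x =>
    intervalIntegral.integral_add ((hA.comp (Continuous.prodMk_right x)).intervalIntegrable c d)
      ((hB.comp (Continuous.prodMk_right x)).intervalIntegrable c d)
  simp only [hinner]
  exact intervalIntegral.integral_add
    ((intervalIntegral.continuous_parametric_intervalIntegral_of_continuous' (μ := volume)
      (f := fun x y => A (x, y)) hA c d).intervalIntegrable a b)
    ((intervalIntegral.continuous_parametric_intervalIntegral_of_continuous' (μ := volume)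
      (f := fun x y => B (x, y)) hB c d).intervalIntegrable a b)

lemma pos1d {f : ℝ → ℝ} (hf : Continuous f) (hnn : ∀ x, 0 ≤ f x) {ℓ c : ℝ}
    (hℓ : 0 < ℓ) (hc : c ∈ Set.Ico 0 ℓ) (hfc : 0 < f c) : 0 < ∫ x in (0:ℝ)..ℓ, f x := by
  obtain ⟨δ, hδ, hball⟩ := Metric.mem_nhds_iff.1 (hf.continuousAt.preimage_mem_nhds
    (Ioi_mem_nhds hfc))
  set b := min (c + δ) ℓ with hbdef
  have hcb : c < b := lt_min (by linarith) hc.2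
  have hpos : 0 < ∫ x in c..b, f x := by
    apply intervalIntegral_pos_of_pos_on (hf.intervalIntegrable c b) _ hcb
    intro x hx
    have : x ∈ Metric.ball c δ := by
      rw [Metric.mem_ball, Real.dist_eq, abs_lt]
      constructor <;> [linarith [hx.1]; linarith [hx.2, min_le_left (c + δ) ℓ]]
    exact hball this
  have h1 : (0:ℝ) ≤ ∫ x in (0:ℝ)..c, f x :=
    intervalIntegral.integral_nonneg hc.1 (fun x _ => hnn x)
  have h2 : (0:ℝ) ≤ ∫ x in b..ℓ, f x :=
    intervalIntegral.integral_nonneg (min_le_right _ _) (fun x _ => hnn x)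
  have hsplit : ∫ x in (0:ℝ)..ℓ, f x =
      (∫ x in (0:ℝ)..c, f x) + (∫ x in c..b, f x) + ∫ x in b..ℓ, f x := by
    rw [intervalIntegral.integral_add_adjacent_intervals (hf.intervalIntegrable 0 c)
      (hf.intervalIntegrable c b),
      intervalIntegral.integral_add_adjacent_intervals (hf.intervalIntegrable 0 b)
      (hf.intervalIntegrable b ℓ)]
  rw [hsplit]; linarith

lemma pos2d {h : ℝ → ℝ → ℝ} (hc : Continuous fun p : ℝ × ℝ => h p.1 p.2)
    (hnn : ∀ x y, 0 ≤ h x y) {ℓ₁ ℓ₂ p₁ p₂ : ℝ} (hℓ₁ : 0 < ℓ₁) (hℓ₂ : 0 < ℓ₂)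
    (hp₁ : p₁ ∈ Set.Ico 0 ℓ₁) (hp₂ : p₂ ∈ Set.Ico 0 ℓ₂) (hp : 0 < h p₁ p₂) :
    0 < ∫ x₁ in (0:ℝ)..ℓ₁, ∫ x₂ in (0:ℝ)..ℓ₂, h x₁ x₂ := by
  have hGc : Continuous fun x₁ => ∫ x₂ in (0:ℝ)..ℓ₂, h x₁ x₂ :=
    intervalIntegral.continuous_parametric_intervalIntegral_of_continuous' (μ := volume)
      (f := h) hc 0 ℓ₂
  apply pos1d hGc (fun x => intervalIntegral.integral_nonneg hℓ₂.le fun y _ => hnn x y) hℓ₁ hp₁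
  exact pos1d (hc.comp (Continuous.prodMk_right p₁)) (hnn p₁) hℓ₂ hp₂ hp

lemma reduce1 {f : ℝ → ℂ} {ℓ : ℝ} (hℓ : 0 < ℓ) (hper : ∀ x, f (x + ℓ) = f x) (c : ℝ) :
    ∃ c' ∈ Set.Ico 0 ℓ, f c' = f c := by
  have hp : Function.Periodic f ℓ := hper
  refine ⟨ℓ * Int.fract (c / ℓ), ⟨mul_nonneg hℓ.le (Int.fract_nonneg _),
    by nlinarith [Int.fract_lt_one (c / ℓ)]⟩, ?_⟩
  have he : ℓ * Int.fract (c / ℓ) = c - (⌊c / ℓ⌋ : ℤ) * ℓ := by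
    rw [Int.fract]; field_simp
  rw [he, hp.sub_int_mul_eq]

lemma green (ℓ₁ ℓ₂ : ℝ) (hℓ₁ : 0 < ℓ₁) (hℓ₂ : 0 < ℓ₂)
    (G φ : ℝ × ℝ → ℂ) (hG : ContDiff ℝ 1 G) (hφ : ContDiff ℝ 1 φ)
    (hGper : ∀ x₁ x₂ : ℝ, G (x₁ + ℓ₁, x₂) = G (x₁, x₂) ∧ G (x₁, x₂ + ℓ₂) = G (x₁, x₂))
    (hφper : ∀ x₁ x₂ : ℝ, φ (x₁ + ℓ₁, x₂) = φ (x₁, x₂) ∧ φ (x₁, x₂ + ℓ₂) = φ (x₁, x₂)) :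
    ∫ x₁ in (0:ℝ)..ℓ₁, ∫ x₂ in (0:ℝ)..ℓ₂,
        (fderiv ℝ G (x₁, x₂) (1, 0) + fderiv ℝ G (x₁, x₂) (0, 1)) * star (φ (x₁, x₂))
      = - ∫ x₁ in (0:ℝ)..ℓ₁, ∫ x₂ in (0:ℝ)..ℓ₂,
        G (x₁, x₂) * star (fderiv ℝ φ (x₁, x₂) (1, 0) + fderiv ℝ φ (x₁, x₂) (0, 1)) := by
  have hGd : Differentiable ℝ G := hG.differentiable one_ne_zero
  have hφd : Differentiable ℝ φ := hφ.differentiable one_ne_zero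
  have hGc : Continuous G := hG.continuous
  have hφc : Continuous φ := hφ.continuous
  have hone : ((0:WithTop ℕ∞) + 1 ≤ 1) := by norm_num
  have c1G : Continuous fun p : ℝ × ℝ => fderiv ℝ G p ((1:ℝ), (0:ℝ)) :=
    ((hG.fderiv_right (m := 0) hone).clm_apply contDiff_const).continuous
  have c2G : Continuous fun p : ℝ × ℝ => fderiv ℝ G p ((0:ℝ), (1:ℝ)) :=
    ((hG.fderiv_right (m := 0) hone).clm_apply contDiff_const).continuous
  have c1φ : Continuous fun p : ℝ × ℝ => fderiv ℝ φ p ((1:ℝ), (0:ℝ)) :=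
    ((hφ.fderiv_right (m := 0) hone).clm_apply contDiff_const).continuous
  have c2φ : Continuous fun p : ℝ × ℝ => fderiv ℝ φ p ((0:ℝ), (1:ℝ)) :=
    ((hφ.fderiv_right (m := 0) hone).clm_apply contDiff_const).continuous
  -- integration by parts in the second variable
  have key2 : ∀ x₁ : ℝ, (∫ x₂ in (0:ℝ)..ℓ₂, fderiv ℝ G (x₁, x₂) (0, 1) * star (φ (x₁, x₂)))
      = - ∫ x₂ in (0:ℝ)..ℓ₂, G (x₁, x₂) * star (fderiv ℝ φ (x₁, x₂) (0, 1)) := by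
    intro x₁
    apply parts' (fun t => G (x₁, t)) (fun t => star (φ (x₁, t)))
      (fun t => fderiv ℝ G (x₁, t) (0, 1)) (fun t => star (fderiv ℝ φ (x₁, t) (0, 1)))
      (fun s => hasDerivAt_snd' G hGd x₁ s) (fun s => (hasDerivAt_snd' φ hφd x₁ s).star)
      (c2G.comp (Continuous.prodMk_right x₁)) (continuous_star.comp (c2φ.comp (Continuous.prodMk_right x₁)))
    have e1 : G (x₁, ℓ₂) = G (x₁, 0) := by simpa using (hGper x₁ 0).2
    have e2 : φ (x₁, ℓ₂) = φ (x₁, 0) := by simpa using (hφper x₁ 0).2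
    rw [e1, e2]
  -- integration by parts in the first variable
  have key1 : ∀ x₂ : ℝ, (∫ x₁ in (0:ℝ)..ℓ₁, fderiv ℝ G (x₁, x₂) (1, 0) * star (φ (x₁, x₂)))
      = - ∫ x₁ in (0:ℝ)..ℓ₁, G (x₁, x₂) * star (fderiv ℝ φ (x₁, x₂) (1, 0)) := by
    intro x₂
    apply parts' (fun t => G (t, x₂)) (fun t => star (φ (t, x₂)))
      (fun t => fderiv ℝ G (t, x₂) (1, 0)) (fun t => star (fderiv ℝ φ (t, x₂) (1, 0)))
      (fun s => hasDerivAt_fst' G hGd s x₂) (fun s => (hasDerivAt_fst' φ hφd s x₂).star)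
      (c1G.comp (continuous_id.prodMk continuous_const))
      (continuous_star.comp (c1φ.comp (continuous_id.prodMk continuous_const)))
    have e1 : G (ℓ₁, x₂) = G (0, x₂) := by simpa using (hGper 0 x₂).1
    have e2 : φ (ℓ₁, x₂) = φ (0, x₂) := by simpa using (hφper 0 x₂).1
    rw [e1, e2]
  have hA1 : (∫ x₁ in (0:ℝ)..ℓ₁, ∫ x₂ in (0:ℝ)..ℓ₂,
      fderiv ℝ G (x₁, x₂) (1, 0) * star (φ (x₁, x₂)))
      = - ∫ x₁ in (0:ℝ)..ℓ₁, ∫ x₂ in (0:ℝ)..ℓ₂,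
        G (x₁, x₂) * star (fderiv ℝ φ (x₁, x₂) (1, 0)) := by
    rw [swapII (fun p => fderiv ℝ G p (1, 0) * star (φ p)) (c1G.mul (continuous_star.comp hφc))
      hℓ₁.le hℓ₂.le]
    simp only [key1]
    rw [intervalIntegral.integral_neg]
    rw [swapII (fun p => G p * star (fderiv ℝ φ p (1, 0)))
      (hGc.mul (continuous_star.comp c1φ)) hℓ₁.le hℓ₂.le]
  have hA2 : (∫ x₁ in (0:ℝ)..ℓ₁, ∫ x₂ in (0:ℝ)..ℓ₂,
      fderiv ℝ G (x₁, x₂) (0, 1) * star (φ (x₁, x₂)))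
      = - ∫ x₁ in (0:ℝ)..ℓ₁, ∫ x₂ in (0:ℝ)..ℓ₂,
        G (x₁, x₂) * star (fderiv ℝ φ (x₁, x₂) (0, 1)) := by
    simp only [key2]
    rw [intervalIntegral.integral_neg]
  have hsum := splitII (a := (0:ℝ)) (b := ℓ₁) (c := (0:ℝ)) (d := ℓ₂)
    (fun p => fderiv ℝ G p (1, 0) * star (φ p)) (fun p => fderiv ℝ G p (0, 1) * star (φ p))
    (c1G.mul (continuous_star.comp hφc)) (c2G.mul (continuous_star.comp hφc))
  have hsum2 := splitII (a := (0:ℝ)) (b := ℓ₁) (c := (0:ℝ)) (d := ℓ₂)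
    (fun p => G p * star (fderiv ℝ φ p (1, 0))) (fun p => G p * star (fderiv ℝ φ p (0, 1)))
    (hGc.mul (continuous_star.comp c1φ)) (hGc.mul (continuous_star.comp c2φ))
  calc ∫ x₁ in (0:ℝ)..ℓ₁, ∫ x₂ in (0:ℝ)..ℓ₂,
        (fderiv ℝ G (x₁, x₂) (1, 0) + fderiv ℝ G (x₁, x₂) (0, 1)) * star (φ (x₁, x₂))
      = ∫ x₁ in (0:ℝ)..ℓ₁, ∫ x₂ in (0:ℝ)..ℓ₂,
        (fderiv ℝ G (x₁, x₂) (1, 0) * star (φ (x₁, x₂)) +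
         fderiv ℝ G (x₁, x₂) (0, 1) * star (φ (x₁, x₂))) := by
          simp only [add_mul]
    _ = (∫ x₁ in (0:ℝ)..ℓ₁, ∫ x₂ in (0:ℝ)..ℓ₂, fderiv ℝ G (x₁, x₂) (1, 0) * star (φ (x₁, x₂)))
        + ∫ x₁ in (0:ℝ)..ℓ₁, ∫ x₂ in (0:ℝ)..ℓ₂,
          fderiv ℝ G (x₁, x₂) (0, 1) * star (φ (x₁, x₂)) := hsum
    _ = - ((∫ x₁ in (0:ℝ)..ℓ₁, ∫ x₂ in (0:ℝ)..ℓ₂, G (x₁, x₂) * star (fderiv ℝ φ (x₁, x₂) (1, 0)))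
        + ∫ x₁ in (0:ℝ)..ℓ₁, ∫ x₂ in (0:ℝ)..ℓ₂,
          G (x₁, x₂) * star (fderiv ℝ φ (x₁, x₂) (0, 1))) := by rw [hA1, hA2]; ring
    _ = - ∫ x₁ in (0:ℝ)..ℓ₁, ∫ x₂ in (0:ℝ)..ℓ₂,
        G (x₁, x₂) * star (fderiv ℝ φ (x₁, x₂) (1, 0) + fderiv ℝ φ (x₁, x₂) (0, 1)) := by
          rw [← hsum2]
          congr 1
          congr 1
          ext x₁
          congr 1
          ext x₂
          rw [star_add, mul_add]

noncomputable def Wfun (v : ℝ → ℝ → ℂ) : ℝ × ℝ → ℂ :=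
  fun p => fderiv ℝ (fun q : ℝ × ℝ => v q.1 q.2) p (1, 1)




noncomputable def Fpfun (κ : ℝ → ℝ → ℝ) (v : ℝ → ℝ → ℂ) : ℝ × ℝ → ℂ :=
  fun p => (κ p.1 p.2 : ℂ) * Wfun v p

lemma hzz (z : ℂ) : z * star z = ((‖z‖ ^ 2 : ℝ) : ℂ) := by
  rw [← starRingEnd_apply, Complex.mul_conj]
  norm_cast
  simp [Complex.normSq_eq_norm_sq]


theorem L0_eigenvalues_real_nonpositive
    (ℓ₁ ℓ₂ : ℝ) (hℓ₁ : 0 < ℓ₁) (hℓ₂ : 0 < ℓ₂)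
    (κ : ℝ → ℝ → ℝ) (hκ : ContDiff ℝ 1 (fun p : ℝ × ℝ => κ p.1 p.2))
    (hκper : ∀ x₁ x₂ : ℝ, κ (x₁ + ℓ₁) x₂ = κ x₁ x₂ ∧ κ x₁ (x₂ + ℓ₂) = κ x₁ x₂)
    (κmin : ℝ) (hκmin : 0 < κmin) (hκlb : ∀ x₁ x₂ : ℝ, κmin ≤ κ x₁ x₂)
    (v : ℝ → ℝ → ℂ) (hv : ContDiff ℝ 2 (fun p : ℝ × ℝ => v p.1 p.2))
    (hvper : ∀ x₁ x₂ : ℝ, v (x₁ + ℓ₁) x₂ = v x₁ x₂ ∧ v x₁ (x₂ + ℓ₂) = v x₁ x₂)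
    (hvne : ∃ x₁ x₂ : ℝ, v x₁ x₂ ≠ 0)
    (lam : ℂ) (heig : ∀ x₁ x₂ : ℝ, L0 κ v x₁ x₂ = lam * v x₁ x₂) :
    lam.im = 0 ∧
    lam * ((∫ x₁ in (0:ℝ)..ℓ₁, ∫ x₂ in (0:ℝ)..ℓ₂, ‖v x₁ x₂‖ ^ 2 : ℝ) : ℂ) =
      -(((∫ x₁ in (0:ℝ)..ℓ₁, ∫ x₂ in (0:ℝ)..ℓ₂,
          κ x₁ x₂ * ‖d1 v x₁ x₂ + d2 v x₁ x₂‖ ^ 2 : ℝ) : ℝ) : ℂ) ∧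
    -(∫ x₁ in (0:ℝ)..ℓ₁, ∫ x₂ in (0:ℝ)..ℓ₂,
          κ x₁ x₂ * ‖d1 v x₁ x₂ + d2 v x₁ x₂‖ ^ 2 : ℝ) ≤
      -(κmin * (∫ x₁ in (0:ℝ)..ℓ₁, ∫ x₂ in (0:ℝ)..ℓ₂,
          ‖d1 v x₁ x₂ + d2 v x₁ x₂‖ ^ 2 : ℝ)) ∧
    -(κmin * (∫ x₁ in (0:ℝ)..ℓ₁, ∫ x₂ in (0:ℝ)..ℓ₂,
          ‖d1 v x₁ x₂ + d2 v x₁ x₂‖ ^ 2 : ℝ)) ≤ 0 ∧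
    (lam = 0 ↔ ∀ x₁ x₂ : ℝ, d1 v x₁ x₂ + d2 v x₁ x₂ = 0) := by
  have hVd : Differentiable ℝ (fun p : ℝ × ℝ => v p.1 p.2) := hv.differentiable (by norm_num)
  have hVc : Continuous (fun p : ℝ × ℝ => v p.1 p.2) := hv.continuous
  have hd1 : ∀ x₁ x₂ : ℝ, d1 v x₁ x₂ = fderiv ℝ (fun p : ℝ × ℝ => v p.1 p.2) (x₁, x₂) (1, 0) :=
    fun x₁ x₂ => (hasDerivAt_fst' _ hVd x₁ x₂).deriv
  have hd2 : ∀ x₁ x₂ : ℝ, d2 v x₁ x₂ = fderiv ℝ (fun p : ℝ × ℝ => v p.1 p.2) (x₁, x₂) (0, 1) :=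
    fun x₁ x₂ => (hasDerivAt_snd' _ hVd x₁ x₂).deriv
  have hW : ∀ x₁ x₂ : ℝ, d1 v x₁ x₂ + d2 v x₁ x₂ = Wfun v (x₁, x₂) := by
    intro x₁ x₂
    rw [hd1, hd2]
    show _ = fderiv ℝ (fun q : ℝ × ℝ => v q.1 q.2) (x₁, x₂) (1, 1)
    rw [← map_add]
    norm_num
  have hWC : ContDiff ℝ 1 (Wfun v) :=
    (hv.fderiv_right (m := 1) (by norm_num)).clm_apply (contDiff_const (c := ((1:ℝ), (1:ℝ))))
  have hWc : Continuous (Wfun v) := hWC.continuous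
  have hκc : Continuous (fun p : ℝ × ℝ => κ p.1 p.2) := hκ.continuous
  have hFpC : ContDiff ℝ 1 (Fpfun κ v) := (Complex.ofRealCLM.contDiff.comp hκ).mul hWC
  have hFpd : Differentiable ℝ (Fpfun κ v) := hFpC.differentiable one_ne_zero
  have hL0 : ∀ x₁ x₂ : ℝ, L0 κ v x₁ x₂ =
      fderiv ℝ (Fpfun κ v) (x₁, x₂) (1, 0) + fderiv ℝ (Fpfun κ v) (x₁, x₂) (0, 1) := by
    intro x₁ x₂
    have h1 : (fun s => (κ s x₂ : ℂ) * (d1 v s x₂ + d2 v s x₂)) =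
        fun s => Fpfun κ v (s, x₂) := by
      funext s; simp only [Fpfun]; rw [hW]
    have h2 : (fun s => (κ x₁ s : ℂ) * (d1 v x₁ s + d2 v x₁ s)) =
        fun s => Fpfun κ v (x₁, s) := by
      funext s; simp only [Fpfun]; rw [hW]
    show deriv (fun s => (κ s x₂ : ℂ) * (d1 v s x₂ + d2 v s x₂)) x₁ +
        deriv (fun s => (κ x₁ s : ℂ) * (d1 v x₁ s + d2 v x₁ s)) x₂ = _
    rw [h1, h2, (hasDerivAt_fst' _ hFpd x₁ x₂).deriv, (hasDerivAt_snd' _ hFpd x₁ x₂).deriv]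
  -- periodicity of the partial derivatives
  have h11 : ∀ x₁ x₂ : ℝ, d1 v (x₁ + ℓ₁) x₂ = d1 v x₁ x₂ := by
    intro x₁ x₂
    show deriv (fun s => v s x₂) (x₁ + ℓ₁) = deriv (fun s => v s x₂) x₁
    rw [← deriv_comp_add_const]
    congr 1
    funext s
    exact (hvper s x₂).1
  have h12 : ∀ x₁ x₂ : ℝ, d1 v x₁ (x₂ + ℓ₂) = d1 v x₁ x₂ := by
    intro x₁ x₂
    show deriv (fun s => v s (x₂ + ℓ₂)) x₁ = deriv (fun s => v s x₂) x₁
    congr 1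
    funext s
    exact (hvper s x₂).2
  have h21 : ∀ x₁ x₂ : ℝ, d2 v (x₁ + ℓ₁) x₂ = d2 v x₁ x₂ := by
    intro x₁ x₂
    show deriv (fun t => v (x₁ + ℓ₁) t) x₂ = deriv (fun t => v x₁ t) x₂
    congr 1
    funext t
    exact (hvper x₁ t).1
  have h22 : ∀ x₁ x₂ : ℝ, d2 v x₁ (x₂ + ℓ₂) = d2 v x₁ x₂ := by
    intro x₁ x₂
    show deriv (fun t => v x₁ t) (x₂ + ℓ₂) = deriv (fun t => v x₁ t) x₂
    rw [← deriv_comp_add_const]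
    congr 1
    funext t
    exact (hvper x₁ t).2
  have hWper : ∀ x₁ x₂ : ℝ, Wfun v (x₁ + ℓ₁, x₂) = Wfun v (x₁, x₂) ∧
      Wfun v (x₁, x₂ + ℓ₂) = Wfun v (x₁, x₂) := by
    intro x₁ x₂
    constructor
    · rw [← hW, ← hW, h11, h21]
    · rw [← hW, ← hW, h12, h22]
  have hFpper : ∀ x₁ x₂ : ℝ, Fpfun κ v (x₁ + ℓ₁, x₂) = Fpfun κ v (x₁, x₂) ∧
      Fpfun κ v (x₁, x₂ + ℓ₂) = Fpfun κ v (x₁, x₂) := by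
    intro x₁ x₂
    constructor
    · show (κ (x₁ + ℓ₁) x₂ : ℂ) * Wfun v (x₁ + ℓ₁, x₂) = _
      rw [(hκper x₁ x₂).1, (hWper x₁ x₂).1]; rfl
    · show (κ x₁ (x₂ + ℓ₂) : ℂ) * Wfun v (x₁, x₂ + ℓ₂) = _
      rw [(hκper x₁ x₂).2, (hWper x₁ x₂).2]; rfl
  have hsum' : ∀ x₁ x₂ : ℝ, fderiv ℝ (fun p : ℝ × ℝ => v p.1 p.2) (x₁, x₂) (1, 0) +
      fderiv ℝ (fun p : ℝ × ℝ => v p.1 p.2) (x₁, x₂) (0, 1) = Wfun v (x₁, x₂) := by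
    intro x₁ x₂
    rw [← hd1, ← hd2, hW]
  have hgreen : (∫ x₁ in (0:ℝ)..ℓ₁, ∫ x₂ in (0:ℝ)..ℓ₂,
      (fderiv ℝ (Fpfun κ v) (x₁, x₂) (1, 0) + fderiv ℝ (Fpfun κ v) (x₁, x₂) (0, 1)) *
        star (v x₁ x₂))
      = - ∫ x₁ in (0:ℝ)..ℓ₁, ∫ x₂ in (0:ℝ)..ℓ₂,
      Fpfun κ v (x₁, x₂) * star (fderiv ℝ (fun p : ℝ × ℝ => v p.1 p.2) (x₁, x₂) (1, 0) +
        fderiv ℝ (fun p : ℝ × ℝ => v p.1 p.2) (x₁, x₂) (0, 1)) :=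
    green ℓ₁ ℓ₂ hℓ₁ hℓ₂ (Fpfun κ v) (fun p : ℝ × ℝ => v p.1 p.2) hFpC
      (hv.of_le (by norm_num)) hFpper (fun x₁ x₂ => hvper x₁ x₂)
  simp only [hsum'] at hgreen
  -- the key identity
  have e1 : ((∫ x₁ in (0:ℝ)..ℓ₁, ∫ x₂ in (0:ℝ)..ℓ₂, ‖v x₁ x₂‖ ^ 2 : ℝ) : ℂ)
      = ∫ x₁ in (0:ℝ)..ℓ₁, ∫ x₂ in (0:ℝ)..ℓ₂, v x₁ x₂ * star (v x₁ x₂) := by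
    simp only [← intervalIntegral.integral_ofReal, ← hzz]
  have e2 : (∫ x₁ in (0:ℝ)..ℓ₁, ∫ x₂ in (0:ℝ)..ℓ₂, (lam * v x₁ x₂) * star (v x₁ x₂))
      = lam * ∫ x₁ in (0:ℝ)..ℓ₁, ∫ x₂ in (0:ℝ)..ℓ₂, v x₁ x₂ * star (v x₁ x₂) := by
    simp only [mul_assoc, intervalIntegral.integral_const_mul]
  have e3 : (∫ x₁ in (0:ℝ)..ℓ₁, ∫ x₂ in (0:ℝ)..ℓ₂, (lam * v x₁ x₂) * star (v x₁ x₂))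
      = -((∫ x₁ in (0:ℝ)..ℓ₁, ∫ x₂ in (0:ℝ)..ℓ₂,
          κ x₁ x₂ * ‖Wfun v (x₁, x₂)‖ ^ 2 : ℝ) : ℂ) := by
    calc (∫ x₁ in (0:ℝ)..ℓ₁, ∫ x₂ in (0:ℝ)..ℓ₂, (lam * v x₁ x₂) * star (v x₁ x₂))
        = ∫ x₁ in (0:ℝ)..ℓ₁, ∫ x₂ in (0:ℝ)..ℓ₂, L0 κ v x₁ x₂ * star (v x₁ x₂) := by
          simp only [heig]
      _ = ∫ x₁ in (0:ℝ)..ℓ₁, ∫ x₂ in (0:ℝ)..ℓ₂,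
          (fderiv ℝ (Fpfun κ v) (x₁, x₂) (1, 0) + fderiv ℝ (Fpfun κ v) (x₁, x₂) (0, 1)) *
            star (v x₁ x₂) := by simp only [hL0]
      _ = - ∫ x₁ in (0:ℝ)..ℓ₁, ∫ x₂ in (0:ℝ)..ℓ₂,
          Fpfun κ v (x₁, x₂) * star (Wfun v (x₁, x₂)) := hgreen
      _ = - ∫ x₁ in (0:ℝ)..ℓ₁, ∫ x₂ in (0:ℝ)..ℓ₂,
          ((κ x₁ x₂ * ‖Wfun v (x₁, x₂)‖ ^ 2 : ℝ) : ℂ) := by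
            simp only [Fpfun, mul_assoc, hzz, ← Complex.ofReal_mul]
      _ = -((∫ x₁ in (0:ℝ)..ℓ₁, ∫ x₂ in (0:ℝ)..ℓ₂,
          κ x₁ x₂ * ‖Wfun v (x₁, x₂)‖ ^ 2 : ℝ) : ℂ) := by
            simp only [intervalIntegral.integral_ofReal]
  have key : lam * ((∫ x₁ in (0:ℝ)..ℓ₁, ∫ x₂ in (0:ℝ)..ℓ₂, ‖v x₁ x₂‖ ^ 2 : ℝ) : ℂ)
      = -((∫ x₁ in (0:ℝ)..ℓ₁, ∫ x₂ in (0:ℝ)..ℓ₂,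
          κ x₁ x₂ * ‖Wfun v (x₁, x₂)‖ ^ 2 : ℝ) : ℂ) := by
    rw [e1, ← e2, e3]
  -- positivity of the L² norm of v
  have hRpos : 0 < ∫ x₁ in (0:ℝ)..ℓ₁, ∫ x₂ in (0:ℝ)..ℓ₂, ‖v x₁ x₂‖ ^ 2 := by
    obtain ⟨a, b, hab⟩ := hvne
    obtain ⟨a', ha', hva⟩ := reduce1 hℓ₁ (f := fun s => v s b) (fun x => (hvper x b).1) a
    obtain ⟨b', hb', hvb⟩ := reduce1 hℓ₂ (f := fun t => v a' t) (fun x => (hvper a' x).2) b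
    have hvne' : v a' b' ≠ 0 := by rw [hvb, hva]; exact hab
    exact pos2d (h := fun x y => ‖v x y‖ ^ 2) (hVc.norm.pow 2)
      (fun x y => pow_nonneg (norm_nonneg _) 2) hℓ₁ hℓ₂ ha' hb'
      (pow_pos (norm_pos_iff.2 hvne') 2)
  simp only [hW]
  have hcont2 : Continuous fun p : ℝ × ℝ => κ p.1 p.2 * ‖Wfun v p‖ ^ 2 :=
    hκc.mul (hWc.norm.pow 2)
  have hWn2 : Continuous fun p : ℝ × ℝ => ‖Wfun v p‖ ^ 2 := hWc.norm.pow 2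
  refine ⟨?_, key, ?_, ?_, ?_⟩
  · have him := congrArg Complex.im key
    simp only [Complex.mul_im, Complex.ofReal_im, Complex.ofReal_re, Complex.neg_im,
      mul_zero, zero_add, neg_zero] at him
    exact (mul_eq_zero.1 him).resolve_right hRpos.ne'
  · apply neg_le_neg
    have hstep : ∀ x₁ : ℝ, κmin * (∫ x₂ in (0:ℝ)..ℓ₂, ‖Wfun v (x₁, x₂)‖ ^ 2)
        = ∫ x₂ in (0:ℝ)..ℓ₂, κmin * ‖Wfun v (x₁, x₂)‖ ^ 2 :=
      fun x₁ => (intervalIntegral.integral_const_mul _ _).symm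
    rw [← intervalIntegral.integral_const_mul]
    calc (∫ x₁ in (0:ℝ)..ℓ₁, κmin * ∫ x₂ in (0:ℝ)..ℓ₂, ‖Wfun v (x₁, x₂)‖ ^ 2)
        = ∫ x₁ in (0:ℝ)..ℓ₁, ∫ x₂ in (0:ℝ)..ℓ₂, κmin * ‖Wfun v (x₁, x₂)‖ ^ 2 := by
          simp only [hstep]
      _ ≤ ∫ x₁ in (0:ℝ)..ℓ₁, ∫ x₂ in (0:ℝ)..ℓ₂, κ x₁ x₂ * ‖Wfun v (x₁, x₂)‖ ^ 2 := by
          apply intervalIntegral.integral_mono_on hℓ₁.le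
          · exact (intervalIntegral.continuous_parametric_intervalIntegral_of_continuous'
              (μ := volume) (f := fun x₁ x₂ => κmin * ‖Wfun v (x₁, x₂)‖ ^ 2)
              (show Continuous fun p : ℝ × ℝ => κmin * ‖Wfun v p‖ ^ 2 from continuous_const.mul (hWn2)) 0 ℓ₂).intervalIntegrable 0 ℓ₁
          · exact (intervalIntegral.continuous_parametric_intervalIntegral_of_continuous'
              (μ := volume) (f := fun x₁ x₂ => κ x₁ x₂ * ‖Wfun v (x₁, x₂)‖ ^ 2)
              hcont2 0 ℓ₂).intervalIntegrable 0 ℓ₁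
          · intro x₁ _
            apply intervalIntegral.integral_mono_on hℓ₂.le
            · exact ((continuous_const.mul hWn2).comp (Continuous.prodMk_right x₁)).intervalIntegrable 0 ℓ₂
            · exact (hcont2.comp (Continuous.prodMk_right x₁)).intervalIntegrable 0 ℓ₂
            · intro x₂ _
              exact mul_le_mul_of_nonneg_right (hκlb x₁ x₂) (pow_nonneg (norm_nonneg _) 2)
  · apply neg_nonpos.2
    apply mul_nonneg hκmin.le
    apply intervalIntegral.integral_nonneg hℓ₁.le
    intro x₁ _
    exact intervalIntegral.integral_nonneg hℓ₂.le (fun x₂ _ => pow_nonneg (norm_nonneg _) 2)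
  · constructor
    · intro h0 x₁ x₂
      by_contra hne'
      have hQ0 : (∫ x₁ in (0:ℝ)..ℓ₁, ∫ x₂ in (0:ℝ)..ℓ₂,
          κ x₁ x₂ * ‖Wfun v (x₁, x₂)‖ ^ 2 : ℝ) = 0 := by
        have hk := key
        rw [h0, zero_mul] at hk
        have hk' := neg_eq_zero.1 hk.symm
        exact_mod_cast hk'
      obtain ⟨a', ha', hwa⟩ := reduce1 hℓ₁ (f := fun s => Wfun v (s, x₂))
        (fun x => (hWper x x₂).1) x₁
      obtain ⟨b', hb', hwb⟩ := reduce1 hℓ₂ (f := fun t => Wfun v (a', t))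
        (fun x => (hWper a' x).2) x₂
      have hWne : Wfun v (a', b') ≠ 0 := by rw [hwb, hwa]; exact hne'
      have hpos := pos2d (h := fun x y => κ x y * ‖Wfun v (x, y)‖ ^ 2) hcont2
        (fun x y => mul_nonneg (hκmin.le.trans (hκlb x y)) (pow_nonneg (norm_nonneg _) 2))
        hℓ₁ hℓ₂ ha' hb'
        (mul_pos (hκmin.trans_le (hκlb a' b')) (pow_pos (norm_pos_iff.2 hWne) 2))
      exact absurd hQ0 hpos.ne'
    · intro hw0
      have hQ0 : (∫ x₁ in (0:ℝ)..ℓ₁, ∫ x₂ in (0:ℝ)..ℓ₂,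
          κ x₁ x₂ * ‖Wfun v (x₁, x₂)‖ ^ 2 : ℝ) = 0 := by
        simp [hw0]
      have hk := key
      rw [hQ0] at hk
      simp only [Complex.ofReal_zero, neg_zero] at hk
      have hR : ((∫ x₁ in (0:ℝ)..ℓ₁, ∫ x₂ in (0:ℝ)..ℓ₂, ‖v x₁ x₂‖ ^ 2 : ℝ) : ℂ) ≠ 0 :=
        Complex.ofReal_ne_zero.2 hRpos.ne'
      exact (mul_eq_zero.1 hk).resolve_right hR
end

section
/- Let ℓ>0 and let κ̃:ℝ→ℝ be C¹, ℓ-periodic, and satisfy κ̃(x) ≥ κ_min > 0 everywhere. Suppose v:ℝ→ℝ is C², ℓ-periodic, not identically zero, and satisfies the eigen-problem (κ̃·v')' = λ·v for some real λ ≠ 0. Then v has zero mean over a period and λ ≤ −κ_min·(2π/ℓ)² = −4π²κ_min/ℓ². -/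
open Real

section helpers
open MeasureTheory intervalIntegral Set Complex

private lemma parseval_periodic (ℓ : ℝ) (hℓ : 0 < ℓ) (g : ℝ → ℂ) (hg : Continuous g)
    (hper : ∀ x, g (x + ℓ) = g x) :
    Summable (fun n : ℤ => ‖fourierCoeffOn (lt_add_of_pos_right (0:ℝ) hℓ) g n‖ ^ 2) ∧
    ∑' n : ℤ, ‖fourierCoeffOn (lt_add_of_pos_right (0:ℝ) hℓ) g n‖ ^ 2
      = (1 / ℓ) * ∫ x in (0:ℝ)..(0 + ℓ), ‖g x‖ ^ 2 := by
  haveI : Fact (0 < ℓ) := ⟨hℓ⟩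
  have hg0 : g 0 = g ℓ := by rw [← hper 0, zero_add]
  set Gcm : C(AddCircle ℓ, ℂ) :=
    ⟨AddCircle.liftIco ℓ 0 g, AddCircle.liftIco_zero_continuous hg0 hg.continuousOn⟩ with hGcm
  have hcoeff : ∀ n : ℤ, fourierCoeff (⇑Gcm) n = fourierCoeffOn (lt_add_of_pos_right (0:ℝ) hℓ) g n := by
    intro n
    exact fourierCoeff_liftIco_eq g n
  set Gl := ContinuousMap.toLp (E := ℂ) 2 AddCircle.haarAddCircle ℂ Gcm with hGL
  have h1 : ∀ n : ℤ, fourierCoeff (Gl : AddCircle ℓ → ℂ) n = fourierCoeff (⇑Gcm) n := fun n =>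
    fourierCoeff_toLp Gcm n
  -- Parseval
  have hpars := tsum_sq_fourierCoeff Gl
  -- summability
  have hsum : Summable fun n : ℤ => ‖fourierCoeff (Gl : AddCircle ℓ → ℂ) n‖ ^ 2 := by
    have hm := lp.memℓp (fourierBasis.repr Gl)
    rw [memℓp_gen_iff (by norm_num : (0:ℝ) < (2 : ENNReal).toReal)] at hm
    have heq : (fun n : ℤ => ‖(fourierBasis.repr Gl) n‖ ^ (2 : ENNReal).toReal)
        = fun n : ℤ => ‖fourierCoeff (Gl : AddCircle ℓ → ℂ) n‖ ^ 2 := by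
      funext n
      rw [fourierBasis_repr, ← Real.rpow_natCast ‖fourierCoeff (Gl : AddCircle ℓ → ℂ) n‖ 2]
      norm_num
    rwa [heq] at hm
  have hGcoe : ∀ x : ℝ, x ∈ Ico (0:ℝ) (0 + ℓ) → Gcm (x : AddCircle ℓ) = g x := by
    intro x hx
    rw [zero_add] at hx
    exact AddCircle.liftIco_zero_coe_apply hx
  have hne : ∀ᵐ x : ℝ, x ≠ 0 + ℓ := by
    rw [ae_iff]
    simpa using (measure_singleton (0 + ℓ) : (volume : Measure ℝ) {0 + ℓ} = 0)
  have step4 : (∫ x in (0:ℝ)..(0 + ℓ), ‖Gcm (x : AddCircle ℓ)‖ ^ 2)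
      = ∫ x in (0:ℝ)..(0 + ℓ), ‖g x‖ ^ 2 := by
    rw [intervalIntegral.integral_of_le (by linarith), intervalIntegral.integral_of_le (by linarith)]
    refine setIntegral_congr_ae measurableSet_Ioc (hne.mono fun x hx hxI => ?_)
    rw [hGcoe x ⟨hxI.1.le, lt_of_le_of_ne hxI.2 hx⟩]
  have step3 : (∫ x in (0:ℝ)..(0 + ℓ), ‖Gcm (x : AddCircle ℓ)‖ ^ 2)
      = ∫ t : AddCircle ℓ, ‖Gcm t‖ ^ 2 :=
    AddCircle.intervalIntegral_preimage ℓ 0 (fun t => ‖Gcm t‖ ^ 2)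
  have step2 : (∫ t : AddCircle ℓ, ‖Gcm t‖ ^ 2)
      = ℓ * ∫ t : AddCircle ℓ, ‖Gcm t‖ ^ 2 ∂AddCircle.haarAddCircle := by
    rw [AddCircle.volume_eq_smul_haarAddCircle, MeasureTheory.integral_smul_measure,
      ENNReal.toReal_ofReal hℓ.le, smul_eq_mul]
  have step1 : (∫ t : AddCircle ℓ, ‖(Gl : AddCircle ℓ → ℂ) t‖ ^ 2 ∂AddCircle.haarAddCircle)
      = ∫ t : AddCircle ℓ, ‖Gcm t‖ ^ 2 ∂AddCircle.haarAddCircle := by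
    refine integral_congr_ae ?_
    filter_upwards [ContinuousMap.coeFn_toLp (p := 2) (𝕜 := ℂ) AddCircle.haarAddCircle Gcm] with t ht
    rw [hGL, ht]
  have hmain : ∑' n : ℤ, ‖fourierCoeffOn (lt_add_of_pos_right (0:ℝ) hℓ) g n‖ ^ 2
      = (1 / ℓ) * ∫ x in (0:ℝ)..(0 + ℓ), ‖g x‖ ^ 2 := by
    have : ∑' n : ℤ, ‖fourierCoeffOn (lt_add_of_pos_right (0:ℝ) hℓ) g n‖ ^ 2
        = ∑' n : ℤ, ‖fourierCoeff (Gl : AddCircle ℓ → ℂ) n‖ ^ 2 := by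
      congr 1; funext n; rw [h1, hcoeff]
    rw [this, hpars, step1, ← step4, step3, step2]
    field_simp
  refine ⟨?_, hmain⟩
  have : (fun n : ℤ => ‖fourierCoeffOn (lt_add_of_pos_right (0:ℝ) hℓ) g n‖ ^ 2)
      = fun n : ℤ => ‖fourierCoeff (Gl : AddCircle ℓ → ℂ) n‖ ^ 2 := by
    funext n; rw [h1, hcoeff]
  rwa [this]

private lemma wirtinger (ℓ : ℝ) (hℓ : 0 < ℓ) (f : ℝ → ℝ) (hf : ContDiff ℝ 1 f)
    (hper : ∀ x, f (x + ℓ) = f x) (hmean : (∫ x in (0:ℝ)..ℓ, f x) = 0) :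
    (2 * π / ℓ) ^ 2 * ∫ x in (0:ℝ)..ℓ, (f x) ^ 2 ≤ ∫ x in (0:ℝ)..ℓ, (deriv f x) ^ 2 := by
  haveI : Fact (0 < ℓ) := ⟨hℓ⟩
  have hab : (0:ℝ) < 0 + ℓ := lt_add_of_pos_right 0 hℓ
  set fC : ℝ → ℂ := fun x => Complex.ofReal (f x) with hfC
  set dC : ℝ → ℂ := fun x => Complex.ofReal (deriv f x) with hdC
  have hfcont : Continuous f := hf.continuous
  have hdcont : Continuous (deriv f) := hf.continuous_deriv le_rfl
  have hdper : ∀ x, deriv f (x + ℓ) = deriv f x := by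
    intro x
    have : (fun y => f (y + ℓ)) = f := funext hper
    rw [← deriv_comp_add_const f ℓ x, this]
  set c : ℤ → ℂ := fun n => fourierCoeffOn hab fC n with hc
  set d : ℤ → ℂ := fun n => fourierCoeffOn hab dC n with hd
  -- mean-zero coefficient
  have hc0 : c 0 = 0 := by
    rw [hc]
    simp only [fourierCoeffOn_eq_integral, neg_zero, fourier_zero, one_smul]
    rw [intervalIntegral.integral_ofReal]
    have h0 : (∫ x in (0:ℝ)..(0 + ℓ), f x) = 0 := by rw [zero_add]; exact hmean
    rw [h0]
    simp
  -- derivative coefficient relation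
  have hrel : ∀ n : ℤ, n ≠ 0 → d n = (2 * π * I * n / ℓ) * c n := by
    intro n hn
    have hderiv : ∀ x ∈ uIcc (0:ℝ) (0 + ℓ), HasDerivAt fC (dC x) x := fun x _ =>
      ((hf.differentiable one_ne_zero x).hasDerivAt).ofReal_comp
    have hint : IntervalIntegrable dC volume 0 (0 + ℓ) :=
      (Complex.continuous_ofReal.comp hdcont).intervalIntegrable _ _
    have this : c n =
        1 / (-2 * ↑π * I * ↑n) * ((fourier (-n)) ((0:ℝ) : AddCircle (0 + ℓ - 0)) * (fC (0 + ℓ) - fC 0)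
          - (((0:ℝ) + ℓ : ℝ) - ((0:ℝ) : ℂ)) * d n) :=
      fourierCoeffOn_of_hasDerivAt hab hn hderiv hint
    have hfval : fC (0 + ℓ) - fC 0 = 0 := by
      simp only [hfC]
      rw [zero_add, ← hper 0, zero_add]
      ring
    rw [hfval, mul_zero, zero_sub] at this
    have hℓC : (ℓ : ℂ) ≠ 0 := by exact_mod_cast hℓ.ne'
    have hnC : (n : ℂ) ≠ 0 := Int.cast_ne_zero.mpr hn
    have hπC : (π : ℂ) ≠ 0 := by exact_mod_cast Real.pi_ne_zero
    have h2 : (-2 * π * I * n : ℂ) ≠ 0 := by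
      simp [Complex.I_ne_zero, hnC, hπC]
    have hne : ((ℓ:ℂ) * (2 * (π:ℂ) * I * (n:ℂ))) ≠ 0 := by
      refine mul_ne_zero hℓC ?_
      simp [hπC, hnC, Complex.I_ne_zero]
    rw [this]
    push_cast
    field_simp
    ring
  -- norm inequality termwise
  have hterm : ∀ n : ℤ, (2 * π / ℓ) ^ 2 * ‖c n‖ ^ 2 ≤ ‖d n‖ ^ 2 := by
    intro n
    rcases eq_or_ne n 0 with rfl | hn
    · rw [hc0]; simp
    · rw [hrel n hn, norm_mul, mul_pow]
      have h1 : (1:ℝ) ≤ |(n:ℝ)| := by exact_mod_cast Int.one_le_abs hn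
      have hnorm : ‖(2 * π * I * n / ℓ : ℂ)‖ = 2 * π * |(n:ℝ)| / ℓ := by
        simp [norm_div, norm_mul, abs_of_pos Real.pi_pos, abs_of_pos hℓ]
      rw [hnorm]
      have hbase : 2 * π / ℓ ≤ 2 * π * |(n:ℝ)| / ℓ := by
        calc 2 * π / ℓ = 2 * π * 1 / ℓ := by ring
        _ ≤ 2 * π * |(n:ℝ)| / ℓ := by gcongr
      have h0 : (0:ℝ) ≤ 2 * π / ℓ := by positivity
      exact mul_le_mul_of_nonneg_right (pow_le_pow_left₀ h0 hbase 2) (sq_nonneg _)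
  have hfper' : ∀ x, fC (x + ℓ) = fC x := fun x => by simp only [hfC, hper x]
  have hdper' : ∀ x, dC (x + ℓ) = dC x := fun x => by simp only [hdC, hdper x]
  obtain ⟨hSc, hPc⟩ : Summable (fun n : ℤ => ‖c n‖ ^ 2) ∧
      ∑' n : ℤ, ‖c n‖ ^ 2 = (1 / ℓ) * ∫ x in (0:ℝ)..(0 + ℓ), ‖fC x‖ ^ 2 :=
    parseval_periodic ℓ hℓ fC (Complex.continuous_ofReal.comp hfcont) hfper'
  obtain ⟨hSd, hPd⟩ : Summable (fun n : ℤ => ‖d n‖ ^ 2) ∧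
      ∑' n : ℤ, ‖d n‖ ^ 2 = (1 / ℓ) * ∫ x in (0:ℝ)..(0 + ℓ), ‖dC x‖ ^ 2 :=
    parseval_periodic ℓ hℓ dC (Complex.continuous_ofReal.comp hdcont) hdper'
  have hIf : (∫ x in (0:ℝ)..(0 + ℓ), ‖fC x‖ ^ 2) = ∫ x in (0:ℝ)..ℓ, (f x) ^ 2 := by
    rw [zero_add]
    refine intervalIntegral.integral_congr fun x _ => ?_
    simp [hfC, Complex.norm_real, sq_abs]
  have hId : (∫ x in (0:ℝ)..(0 + ℓ), ‖dC x‖ ^ 2) = ∫ x in (0:ℝ)..ℓ, (deriv f x) ^ 2 := by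
    rw [zero_add]
    refine intervalIntegral.integral_congr fun x _ => ?_
    simp [hdC, Complex.norm_real, sq_abs]
  have hS2 : Summable (fun n : ℤ => (2 * π / ℓ) ^ 2 * ‖c n‖ ^ 2) := hSc.mul_left _
  have hle : ∑' n : ℤ, (2 * π / ℓ) ^ 2 * ‖c n‖ ^ 2 ≤ ∑' n : ℤ, ‖d n‖ ^ 2 :=
    Summable.tsum_le_tsum hterm hS2 hSd
  rw [tsum_mul_left, hPc, hPd, hIf, hId] at hle
  have h := mul_le_mul_of_nonneg_left hle hℓ.le
  calc (2 * π / ℓ) ^ 2 * ∫ x in (0:ℝ)..ℓ, (f x) ^ 2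
      = ℓ * ((2 * π / ℓ) ^ 2 * ((1 / ℓ) * ∫ x in (0:ℝ)..ℓ, (f x) ^ 2)) := by
        field_simp
    _ ≤ ℓ * ((1 / ℓ) * ∫ x in (0:ℝ)..ℓ, (deriv f x) ^ 2) := h
    _ = ∫ x in (0:ℝ)..ℓ, (deriv f x) ^ 2 := by field_simp

end helpers

section main
open MeasureTheory intervalIntegral Set

theorem mesoscale_spectral_gap
    (ℓ : ℝ) (hℓ : 0 < ℓ)
    (κ : ℝ → ℝ) (hκ : ContDiff ℝ 1 κ)
    (hκper : ∀ x : ℝ, κ (x + ℓ) = κ x)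
    (κmin : ℝ) (hκmin : 0 < κmin) (hκlb : ∀ x : ℝ, κmin ≤ κ x)
    (v : ℝ → ℝ) (hv : ContDiff ℝ 2 v)
    (hvper : ∀ x : ℝ, v (x + ℓ) = v x)
    (hvne : ∃ x : ℝ, v x ≠ 0)
    (lam : ℝ) (hlam : lam ≠ 0)
    (heig : ∀ x : ℝ, deriv (fun y => κ y * deriv v y) x = lam * v x) :
    (∫ x in (0:ℝ)..ℓ, v x) = 0 ∧
    lam ≤ -(κmin * (2 * π / ℓ) ^ 2) ∧
    -(κmin * (2 * π / ℓ) ^ 2) = -(4 * π ^ 2 * κmin / ℓ ^ 2) := by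
  have hv1 : ContDiff ℝ 1 v := hv.of_le (by norm_num)
  have hv2 : ContDiff ℝ (1 + 1) v := by exact_mod_cast hv
  have hvd1 : ContDiff ℝ 1 (deriv v) := (contDiff_succ_iff_deriv.mp hv2).2.2
  have hvcont : Continuous v := hv.continuous
  have hdcont : Continuous (deriv v) := hvd1.continuous
  have hdper : ∀ x, deriv v (x + ℓ) = deriv v x := by
    intro x
    have : (fun y => v (y + ℓ)) = v := funext hvper
    rw [← deriv_comp_add_const v ℓ x, this]
  set g : ℝ → ℝ := fun y => κ y * deriv v y with hg
  have hgdiff : Differentiable ℝ g :=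
    (hκ.differentiable one_ne_zero).mul (hvd1.differentiable one_ne_zero)
  have hgderiv : ∀ x, HasDerivAt g (lam * v x) x := by
    intro x
    have h := (hgdiff x).hasDerivAt
    rwa [heig x] at h
  have hgper : ∀ x, g (x + ℓ) = g x := fun x => by rw [hg]; simp only [hκper x, hdper x]
  -- Part 1: mean zero
  have hintv : IntervalIntegrable (fun x => lam * v x) volume 0 ℓ :=
    (continuous_const.mul hvcont).intervalIntegrable _ _
  have hFTC1 : (∫ x in (0:ℝ)..ℓ, lam * v x) = g ℓ - g 0 :=
    intervalIntegral.integral_eq_sub_of_hasDerivAt (fun x _ => hgderiv x) hintv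
  have hg0 : g ℓ = g 0 := by rw [← hgper 0, zero_add]
  have hmean : (∫ x in (0:ℝ)..ℓ, v x) = 0 := by
    have : lam * ∫ x in (0:ℝ)..ℓ, v x = 0 := by
      rw [← intervalIntegral.integral_const_mul, hFTC1, hg0, sub_self]
    exact (mul_eq_zero.mp this).resolve_left hlam
  -- Part 2: Green / energy identity
  set h : ℝ → ℝ := fun y => g y * v y with hh
  have hhderiv : ∀ x, HasDerivAt h (lam * v x ^ 2 + κ x * (deriv v x) ^ 2) x := by
    intro x
    have hd : HasDerivAt h (lam * v x * v x + g x * deriv v x) x := (hgderiv x).mul ((hv1.differentiable one_ne_zero x).hasDerivAt)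
    convert hd using 1
    rw [hg]
    ring
  have hintE : IntervalIntegrable (fun x => lam * v x ^ 2 + κ x * (deriv v x) ^ 2) volume 0 ℓ := by
    apply IntervalIntegrable.add
    · exact (continuous_const.mul (hvcont.pow 2)).intervalIntegrable _ _
    · exact (hκ.continuous.mul (hdcont.pow 2)).intervalIntegrable _ _
  have hFTC2 : (∫ x in (0:ℝ)..ℓ, (lam * v x ^ 2 + κ x * (deriv v x) ^ 2)) = 0 := by
    rw [intervalIntegral.integral_eq_sub_of_hasDerivAt (fun x _ => hhderiv x) hintE]
    have hvl : v ℓ = v 0 := by rw [← hvper 0, zero_add]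
    have : h ℓ = h 0 := by rw [hh]; simp only [hg0, hvl]
    rw [this, sub_self]
  have hsplit : lam * (∫ x in (0:ℝ)..ℓ, v x ^ 2) + (∫ x in (0:ℝ)..ℓ, κ x * (deriv v x) ^ 2) = 0 := by
    rw [← intervalIntegral.integral_const_mul, ← intervalIntegral.integral_add (f := fun x => lam * v x ^ 2) (g := fun x => κ x * deriv v x ^ 2)
      ((continuous_const.mul (hvcont.pow 2)).intervalIntegrable _ _)
      ((hκ.continuous.mul (hdcont.pow 2)).intervalIntegrable _ _)]
    exact hFTC2
  -- lower bound on the energy term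
  have henergy : κmin * (∫ x in (0:ℝ)..ℓ, (deriv v x) ^ 2) ≤ ∫ x in (0:ℝ)..ℓ, κ x * (deriv v x) ^ 2 := by
    rw [← intervalIntegral.integral_const_mul]
    apply intervalIntegral.integral_mono_on hℓ.le
      ((continuous_const.mul (hdcont.pow 2)).intervalIntegrable _ _)
      ((hκ.continuous.mul (hdcont.pow 2)).intervalIntegrable _ _)
    intro x _
    exact mul_le_mul_of_nonneg_right (hκlb x) (sq_nonneg _)
  -- Wirtinger
  have hwirt := wirtinger ℓ hℓ v hv1 hvper hmean
  -- positivity of ∫ v²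
  have hIpos : 0 < ∫ x in (0:ℝ)..ℓ, v x ^ 2 := by
    obtain ⟨x₀, hx₀⟩ := hvne
    have hper' : Function.Periodic v ℓ := hvper
    set x₁ : ℝ := x₀ - ⌊x₀ / ℓ⌋ * ℓ with hx₁def
    have hx₁mem : x₁ ∈ Ico (0:ℝ) ℓ :=
      ⟨Int.sub_floor_div_mul_nonneg x₀ hℓ, Int.sub_floor_div_mul_lt x₀ hℓ⟩
    have hvx₁ : v x₁ ≠ 0 := by
      rw [hx₁def, hper'.sub_int_mul_eq]
      exact hx₀
    rw [intervalIntegral.integral_pos_iff_support_of_nonneg_ae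
      (Filter.Eventually.of_forall fun x => sq_nonneg (v x))
      ((hvcont.pow 2).intervalIntegrable _ _)]
    refine ⟨hℓ, ?_⟩
    have hopen : IsOpen {x : ℝ | v x ≠ 0} := isOpen_ne.preimage hvcont
    obtain ⟨ε, hε, hball⟩ := Metric.isOpen_iff.mp hopen x₁ hvx₁
    set δ := min ε (ℓ - x₁) with hδdef
    have hδpos : 0 < δ := lt_min hε (by linarith [hx₁mem.2])
    have hsub : Ioo x₁ (x₁ + δ) ⊆ Function.support (fun x => v x ^ 2) ∩ Ioc 0 ℓ := by
      intro y hy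
      constructor
      · have : y ∈ Metric.ball x₁ ε := by
          rw [Metric.mem_ball, Real.dist_eq, abs_of_pos (by linarith [hy.1])]
          have := hy.2
          have : y - x₁ < δ := by linarith
          exact lt_of_lt_of_le this (min_le_left _ _)
        have hvy : v y ≠ 0 := hball this
        simp [Function.mem_support, pow_eq_zero_iff, hvy]
      · constructor
        · linarith [hx₁mem.1, hy.1]
        · have : δ ≤ ℓ - x₁ := min_le_right _ _
          linarith [hy.2]
    calc (0:ENNReal) < ENNReal.ofReal δ := by simpa using hδpos
      _ = volume (Ioo x₁ (x₁ + δ)) := by rw [Real.volume_Ioo]; congr 1; ring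
      _ ≤ volume (Function.support (fun x => v x ^ 2) ∩ Ioc 0 ℓ) := measure_mono hsub
  -- combine
  refine ⟨hmean, ?_, by field_simp; ring⟩
  have hchain : lam * (∫ x in (0:ℝ)..ℓ, v x ^ 2)
      ≤ -(κmin * (2 * π / ℓ) ^ 2) * ∫ x in (0:ℝ)..ℓ, v x ^ 2 := by
    have h1 : lam * (∫ x in (0:ℝ)..ℓ, v x ^ 2) = -(∫ x in (0:ℝ)..ℓ, κ x * (deriv v x) ^ 2) := by
      linarith [hsplit]
    have h2 : κmin * ((2 * π / ℓ) ^ 2 * ∫ x in (0:ℝ)..ℓ, v x ^ 2)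
        ≤ κmin * ∫ x in (0:ℝ)..ℓ, (deriv v x) ^ 2 :=
      mul_le_mul_of_nonneg_left hwirt hκmin.le
    nlinarith [henergy]
  exact le_of_mul_le_mul_right (by linarith [hchain]) hIpos

end main
end
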